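/- arXiv:2009.00553 — 7 statements merged into one kernel-verified Lean document; each statement's English description precedes it below -/
import Mathlib

section
/- Let Z_1 be a discrete random variable with ordered support z^1 < z^2 < … < z^M and Z_2, …, Z_J other instruments, such that the vector (Z_1, …, Z_J) satisfies vector monotonicity on a connected support. Define binary variables Z̃_m = 1(Z_1 ≥ z^m) for m = 2, …, M. Then the vector (Z̃_2, …, Z̃_M, Z_2, …, Z_J) also satisfies vector monotonicity (on its induced support). -/
/-- Proposition 4: if the vector of instruments `(Z₁, Z₂, …, Z_J)`, with `Z₁` discrete
with `M` ordered support points (modeled as `Fin M`), satisfies vector monotonicity on a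
connected support `Z`, then the recoded vector `(Z̃₂, …, Z̃_M, Z₂, …, Z_J)`, where
`Z̃ₘ = 1(Z₁ ≥ zᵐ)`, also satisfies vector monotonicity on the induced support. -/
theorem stmt9 {M : ℕ} {ι : Type*} {β : ι → Type*} [∀ j, LinearOrder (β j)]
    {I : Type*} (Z : Set (Fin M × ∀ j, β j))
    (D : I → (Fin M × ∀ j, β j) → Bool)
    (hconn : ∀ p ∈ Z, ∀ q ∈ Z, ∃ (m : ℕ) (w : ℕ → Fin M × ∀ j, β j),
      w 0 = p ∧ w m = q ∧ (∀ k ≤ m, w k ∈ Z) ∧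
      ∀ k < m, ((w k).2 = (w (k + 1)).2) ∨
        ((w k).1 = (w (k + 1)).1 ∧
          ∃ j, ∀ j', j' ≠ j → (w k).2 j' = (w (k + 1)).2 j'))
    (hVM : ∀ i, ∀ p ∈ Z, ∀ q ∈ Z, q.1 ≤ p.1 → (∀ j, q.2 j ≤ p.2 j) → D i q ≤ D i p) :
    ∀ i, ∀ p ∈ Z, ∀ q ∈ Z,
      (∀ k : Fin (M - 1),
        (decide (k.val + 1 ≤ (q.1 : ℕ)) : Bool) ≤ decide (k.val + 1 ≤ (p.1 : ℕ))) →
      (∀ j, q.2 j ≤ p.2 j) → D i q ≤ D i p := by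
  intro i p hp q hq hk hβ
  apply hVM i p hp q hq _ hβ
  -- show q.1 ≤ p.1
  rcases Nat.eq_zero_or_pos (q.1 : ℕ) with h0 | h0
  · exact Fin.le_def.mpr (by omega)
  · have hlt : (q.1 : ℕ) - 1 < M - 1 := by have := q.1.isLt; omega
    have := hk ⟨(q.1 : ℕ) - 1, hlt⟩
    simp only [Fin.le_def]
    have h1 : (decide ((q.1 : ℕ) - 1 + 1 ≤ (q.1 : ℕ)) : Bool) = true := by
      simp; omega
    rw [h1] at this
    have h2 := Bool.le_iff_imp.mp this rfl
    have h3 := of_decide_eq_true h2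
    have h4 : ((⟨(q.1:ℕ)-1, hlt⟩ : Fin (M-1)).val) = (q.1:ℕ)-1 := rfl
    rw [h4] at h3
    omega
end

section
/- Under exclusion/independence, for any function h : Z → ℝ with E[h(Z)] = 0, the covariance identities hold: E[Y·D·h(Z)] = ∑_g P(G = g) E[Y(1) | G = g] E[D_g(Z) h(Z)], E[Y·(1−D)·h(Z)] = −∑_g P(G = g) E[Y(0) | G = g] E[D_g(Z) h(Z)], and hence E[Y·h(Z)] = ∑_g P(G = g) E[D_g(Z) h(Z)] Δ_g, where Δ_g = E[Y(1) − Y(0) | G = g]. -/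
open MeasureTheory ProbabilityTheory

/-! Since `D ∈ {0, 1}`, `Y·D·h(Z) = Y(1)·D_G(Z)h(Z) = ∑_g 1{G = g}Y(1)·D_g(Z)h(Z)`, and each
summand is a function of `(Y(1), G)` times a function of `Z`, so independence factors its
expectation as `(∫_{G=g} Y(1))·E[D_g(Z)h(Z)]`. The untreated part is the same with `Y(0)` and
`1 − D_g`, where `E[h(Z)] = 0` turns `E[(1 − D_g(Z))h(Z)]` into `−E[D_g(Z)h(Z)]`. -/

section Compliance

variable {Ω β γ ζ : Type*} [MeasurableSpace Ω] {μ : Measure Ω}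
  [MeasurableSpace β] [MeasurableSpace γ] [MeasurableSpace ζ]

theorem integrable_comp_of_finite [IsFiniteMeasure μ] [Finite β] [MeasurableSingletonClass β]
    {W : Ω → β} (hW : Measurable W) (φ : β → ℝ) : Integrable (fun ω => φ (W ω)) μ := by
  obtain ⟨C, hC⟩ := Finite.exists_le fun b => ‖φ b‖
  exact .of_bound ((measurable_of_finite φ).comp hW).aestronglyMeasurable C
    (ae_of_all _ fun ω => hC (W ω))

theorem MeasureTheory.Integrable.mul_comp_of_finite [Finite β] [MeasurableSingletonClass β]
    {V : Ω → ℝ} (hV : Integrable V μ) {W : Ω → β} (hW : Measurable W) (φ : β → ℝ) :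
    Integrable (fun ω => V ω * φ (W ω)) μ := by
  obtain ⟨C, hC⟩ := Finite.exists_le fun b => ‖φ b‖
  exact hV.mul_bdd ((measurable_of_finite φ).comp hW).aestronglyMeasurable
    (ae_of_all _ fun ω => hC (W ω))

theorem integral_indicator_mul_comp_eq_setIntegral_mul [MeasurableSingletonClass γ]
    {V : Ω → ℝ} {G : Ω → γ} {Z : Ω → ζ} (hG : Measurable G) (hZ : Measurable Z)
    (hV : AEStronglyMeasurable V μ) (hind : IndepFun (fun ω => (V ω, G ω)) Z μ)
    {φ : ζ → ℝ} (hφ : Measurable φ) (g : γ) :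
    ∫ ω, {ω | G ω = g}.indicator V ω * φ (Z ω) ∂μ =
      (∫ ω in {ω | G ω = g}, V ω ∂μ) * ∫ ω, φ (Z ω) ∂μ := by
  have hs : MeasurableSet {ω | G ω = g} := hG (measurableSet_singleton g)
  have hF : Measurable ((Prod.snd ⁻¹' {g}).indicator (Prod.fst : ℝ × γ → ℝ)) :=
    measurable_fst.indicator (measurable_snd (measurableSet_singleton g))
  have hind' : IndepFun ({ω | G ω = g}.indicator V) (fun ω => φ (Z ω)) μ := by
    convert hind.comp hF hφ using 1
    · ext ω
      classical
      simp [Set.indicator_apply]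
    · rfl
  rw [hind'.integral_fun_mul_eq_mul_integral (hV.indicator hs)
    (hφ.comp hZ).aestronglyMeasurable, integral_indicator hs]

theorem integral_mul_comp_eq_sum_setIntegral_mul [Fintype γ] [MeasurableSingletonClass γ]
    [Finite ζ] [MeasurableSingletonClass ζ] {V : Ω → ℝ} {G : Ω → γ} {Z : Ω → ζ}
    (hG : Measurable G) (hZ : Measurable Z) (hV : Integrable V μ)
    (hind : IndepFun (fun ω => (V ω, G ω)) Z μ) (ψ : γ → ζ → ℝ) :
    ∫ ω, V ω * ψ (G ω) (Z ω) ∂μ =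
      ∑ g, (∫ ω in {ω | G ω = g}, V ω ∂μ) * ∫ ω, ψ g (Z ω) ∂μ := by
  have hs (g : γ) : MeasurableSet {ω | G ω = g} := hG (measurableSet_singleton g)
  have hsplit (ω : Ω) :
      V ω * ψ (G ω) (Z ω) = ∑ g, {ω | G ω = g}.indicator V ω * ψ g (Z ω) := by
    classical
    simp [Set.indicator_apply]
  rw [integral_congr_ae (ae_of_all _ hsplit),
    integral_finsetSum _ fun g _ => (hV.indicator (hs g)).mul_comp_of_finite hZ (ψ g)]
  exact Finset.sum_congr rfl fun g _ => integral_indicator_mul_comp_eq_setIntegral_mul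
    hG hZ hV.aestronglyMeasurable hind (measurable_of_finite (ψ g)) g

end Compliance

theorem stmt10_general {Ω : Type*} [MeasurableSpace Ω] (μ : Measure Ω) [IsProbabilityMeasure μ]
    {ζ γ : Type*} [MeasurableSpace ζ] [MeasurableSpace γ]
    [Fintype ζ] [Fintype γ] [MeasurableSingletonClass ζ] [MeasurableSingletonClass γ]
    (Z : Ω → ζ) (G : Ω → γ) (hZm : Measurable Z) (hGm : Measurable G)
    (Dg : γ → ζ → ℝ) (hDg01 : ∀ g z, Dg g z = 0 ∨ Dg g z = 1)
    (Y1 Y0 : Ω → ℝ)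
    (hY1i : Integrable Y1 μ) (hY0i : Integrable Y0 μ)
    (hindep : IndepFun (fun ω => (Y1 ω, Y0 ω, G ω)) Z μ)
    (h : ζ → ℝ) (hmean : ∫ ω, h (Z ω) ∂μ = 0) :
    (∫ ω, (Dg (G ω) (Z ω) * Y1 ω + (1 - Dg (G ω) (Z ω)) * Y0 ω) *
        Dg (G ω) (Z ω) * h (Z ω) ∂μ =
      ∑ g, (∫ ω in {ω | G ω = g}, Y1 ω ∂μ) * ∫ ω, Dg g (Z ω) * h (Z ω) ∂μ) ∧
    (∫ ω, (Dg (G ω) (Z ω) * Y1 ω + (1 - Dg (G ω) (Z ω)) * Y0 ω) *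
        (1 - Dg (G ω) (Z ω)) * h (Z ω) ∂μ =
      -∑ g, (∫ ω in {ω | G ω = g}, Y0 ω ∂μ) * ∫ ω, Dg g (Z ω) * h (Z ω) ∂μ) ∧
    (∫ ω, (Dg (G ω) (Z ω) * Y1 ω + (1 - Dg (G ω) (Z ω)) * Y0 ω) * h (Z ω) ∂μ =
      ∑ g, (∫ ω, Dg g (Z ω) * h (Z ω) ∂μ) *
        ∫ ω in {ω | G ω = g}, (Y1 ω - Y0 ω) ∂μ) := by
  set D : Ω → ℝ := fun ω => Dg (G ω) (Z ω)
  set Y : Ω → ℝ := fun ω => D ω * Y1 ω + (1 - D ω) * Y0 ω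
  have hGZ : Measurable fun ω => (G ω, Z ω) := hGm.prodMk hZm
  have hY1 : IndepFun (fun ω => (Y1 ω, G ω)) Z μ :=
    hindep.comp (measurable_fst.prodMk measurable_snd.snd) measurable_id
  have hY0 : IndepFun (fun ω => (Y0 ω, G ω)) Z μ := hindep.comp measurable_snd measurable_id
  have hYD (ω : Ω) : Y ω * D ω * h (Z ω) = Y1 ω * (Dg (G ω) (Z ω) * h (Z ω)) := by
    rcases hDg01 (G ω) (Z ω) with hd | hd <;> simp [Y, D, hd]
  have hYND (ω : Ω) :
      Y ω * (1 - D ω) * h (Z ω) = Y0 ω * ((1 - Dg (G ω) (Z ω)) * h (Z ω)) := by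
    rcases hDg01 (G ω) (Z ω) with hd | hd <;> simp [Y, D, hd]
  have treated : ∫ ω, Y ω * D ω * h (Z ω) ∂μ =
      ∑ g, (∫ ω in {ω | G ω = g}, Y1 ω ∂μ) * ∫ ω, Dg g (Z ω) * h (Z ω) ∂μ := by
    simp_rw [hYD]
    exact integral_mul_comp_eq_sum_setIntegral_mul hGm hZm hY1i hY1 fun g z => Dg g z * h z
  have untreated : ∫ ω, Y ω * (1 - D ω) * h (Z ω) ∂μ =
      -∑ g, (∫ ω in {ω | G ω = g}, Y0 ω ∂μ) * ∫ ω, Dg g (Z ω) * h (Z ω) ∂μ := by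
    simp_rw [hYND]
    rw [integral_mul_comp_eq_sum_setIntegral_mul hGm hZm hY0i hY0 fun g z => (1 - Dg g z) * h z,
      ← Finset.sum_neg_distrib]
    refine Finset.sum_congr rfl fun g _ => ?_
    simp_rw [sub_mul, one_mul]
    rw [integral_sub (integrable_comp_of_finite hZm h)
      (integrable_comp_of_finite hZm fun z => Dg g z * h z), hmean, zero_sub, mul_neg]
  refine ⟨treated, untreated, ?_⟩
  have hsum (ω : Ω) : Y ω * h (Z ω) = Y ω * D ω * h (Z ω) + Y ω * (1 - D ω) * h (Z ω) := by ring
  rw [integral_congr_ae (ae_of_all _ hsum), integral_add, treated, untreated,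
    ← sub_eq_add_neg, ← Finset.sum_sub_distrib]
  · refine Finset.sum_congr rfl fun g _ => ?_
    rw [integral_sub hY1i.integrableOn hY0i.integrableOn]
    ring
  · simp_rw [hYD]
    exact hY1i.mul_comp_of_finite hGZ fun p => Dg p.1 p.2 * h p.2
  · simp_rw [hYND]
    exact hY0i.mul_comp_of_finite hGZ fun p => (1 - Dg p.1 p.2) * h p.2

/-- Covariance identities under exclusion/independence: for any `h` with `E[h(Z)] = 0`,
`E[Y·D·h(Z)] = ∑_g P(G=g)·E[Y(1)|G=g]·E[D_g(Z)h(Z)]`,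
`E[Y·(1−D)·h(Z)] = −∑_g P(G=g)·E[Y(0)|G=g]·E[D_g(Z)h(Z)]`, and
`E[Y·h(Z)] = ∑_g P(G=g)·E[D_g(Z)h(Z)]·Δ_g`, where `P(G=g)·E[V|G=g]` is written as the
set integral `∫_{G=g} V`. -/
theorem stmt10 {Ω : Type*} [MeasurableSpace Ω] (μ : Measure Ω) [IsProbabilityMeasure μ]
    {ζ γ : Type*} [MeasurableSpace ζ] [MeasurableSpace γ]
    [Fintype ζ] [Fintype γ] [MeasurableSingletonClass ζ] [MeasurableSingletonClass γ]
    (Z : Ω → ζ) (G : Ω → γ) (hZm : Measurable Z) (hGm : Measurable G)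
    (Dg : γ → ζ → ℝ) (hDg01 : ∀ g z, Dg g z = 0 ∨ Dg g z = 1)
    (Y1 Y0 : Ω → ℝ) (hY1m : Measurable Y1) (hY0m : Measurable Y0)
    (hY1i : Integrable Y1 μ) (hY0i : Integrable Y0 μ)
    (hindep : IndepFun (fun ω => (Y1 ω, Y0 ω, G ω)) Z μ)
    (h : ζ → ℝ) (hmean : ∫ ω, h (Z ω) ∂μ = 0) :
    (∫ ω, (Dg (G ω) (Z ω) * Y1 ω + (1 - Dg (G ω) (Z ω)) * Y0 ω) *
        Dg (G ω) (Z ω) * h (Z ω) ∂μ =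
      ∑ g, (∫ ω in {ω | G ω = g}, Y1 ω ∂μ) * ∫ ω, Dg g (Z ω) * h (Z ω) ∂μ) ∧
    (∫ ω, (Dg (G ω) (Z ω) * Y1 ω + (1 - Dg (G ω) (Z ω)) * Y0 ω) *
        (1 - Dg (G ω) (Z ω)) * h (Z ω) ∂μ =
      -∑ g, (∫ ω in {ω | G ω = g}, Y0 ω ∂μ) * ∫ ω, Dg g (Z ω) * h (Z ω) ∂μ) ∧
    (∫ ω, (Dg (G ω) (Z ω) * Y1 ω + (1 - Dg (G ω) (Z ω)) * Y0 ω) * h (Z ω) ∂μ =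
      ∑ g, (∫ ω, Dg g (Z ω) * h (Z ω) ∂μ) *
        ∫ ω in {ω | G ω = g}, (Y1 ω - Y0 ω) ∂μ) :=
  stmt10_general μ Z G hZm hGm Dg hDg01 Y1 Y0 hY1i hY0i hindep h hmean
end

section
/- Under exclusion/independence, for any function h : Z → ℝ, the 2SLS-like estimand satisfies Cov(Y, h(Z)) / Cov(D, h(Z)) = ∑_g w_g Δ_g, where w_g = P(G = g)·Cov(D_g(Z), h(Z)) / ∑_{g'} P(G = g')·Cov(D_{g'}(Z), h(Z)) and Δ_g = E[Y(1) − Y(0) | G = g], provided the denominator Cov(D, h(Z)) is nonzero. -/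
open MeasureTheory ProbabilityTheory

/-- Covariance of two real random variables. -/
noncomputable def cov {Ω : Type*} [MeasurableSpace Ω] (μ : Measure Ω)
    (X W : Ω → ℝ) : ℝ :=
  (∫ ω, X ω * W ω ∂μ) - (∫ ω, X ω ∂μ) * (∫ ω, W ω ∂μ)

/-!
Write `Y = Y(0) + (Y(1) - Y(0)) · D` and `D = ∑_g 1{G = g} · D_g(Z)`. Every summand is then a
factor independent of `Z` times a function of `Z`, and for such a product
`Cov(X · u(Z), v(Z)) = E[X] · Cov(u(Z), v(Z))`, while `Cov(Y(0), h(Z)) = 0`. Hence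
`Cov(D, h(Z)) = ∑_g P(G = g) c_g` and `Cov(Y, h(Z)) = ∑_g E[1{G = g} (Y(1) - Y(0))] c_g`
with `c_g = Cov(D_g(Z), h(Z))`, and the identity is the resulting algebra.
-/

lemma sum_indicator_fiber_mul {Ω γ : Type*} [Fintype γ] (G : Ω → γ) (X : Ω → ℝ)
    (F : γ → Ω → ℝ) (ω : Ω) :
    ∑ g, {ω | G ω = g}.indicator X ω * F g ω = X ω * F (G ω) ω := by
  classical
  simp [Set.indicator_apply, ite_mul, Finset.sum_ite_eq]

section Covariance

variable {Ω : Type*} [MeasurableSpace Ω] {μ : Measure Ω}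

lemma cov_add_left {X X' W : Ω → ℝ} (hX : Integrable X μ) (hX' : Integrable X' μ)
    (hXW : Integrable (fun ω => X ω * W ω) μ) (hX'W : Integrable (fun ω => X' ω * W ω) μ) :
    cov μ (fun ω => X ω + X' ω) W = cov μ X W + cov μ X' W := by
  simp only [cov, add_mul, integral_add hX hX', integral_add hXW hX'W]
  ring

lemma cov_finset_sum_left {ι : Type*} (s : Finset ι) {X : ι → Ω → ℝ} {W : Ω → ℝ}
    (hX : ∀ i ∈ s, Integrable (X i) μ) (hXW : ∀ i ∈ s, Integrable (fun ω => X i ω * W ω) μ) :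
    cov μ (fun ω => ∑ i ∈ s, X i ω) W = ∑ i ∈ s, cov μ (X i) W := by
  simp only [cov, Finset.sum_mul, integral_finsetSum s hX, integral_finsetSum s hXW,
    Finset.sum_sub_distrib]

lemma ProbabilityTheory.IndepFun.cov_eq_zero {X W : Ω → ℝ} (h : IndepFun X W μ)
    (hX : AEStronglyMeasurable X μ) (hW : AEStronglyMeasurable W μ) : cov μ X W = 0 :=
  sub_eq_zero.2 (h.integral_mul_eq_mul_integral hX hW)

variable {ζ : Type*} [MeasurableSpace ζ] [MeasurableSingletonClass ζ] [Fintype ζ] {Z : Ω → ζ}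

lemma MeasureTheory.Integrable.mul_comp_of_fintype (hZ : Measurable Z) {X : Ω → ℝ}
    (hX : Integrable X μ) (u : ζ → ℝ) : Integrable (fun ω => X ω * u (Z ω)) μ :=
  hX.mul_bdd ((measurable_of_finite u).comp hZ).aestronglyMeasurable <| ae_of_all _ fun ω =>
    Finset.single_le_sum (f := fun z => ‖u z‖) (fun _ _ => norm_nonneg _) (Finset.mem_univ (Z ω))

lemma ProbabilityTheory.IndepFun.cov_mul_comp (hZ : Measurable Z) {X : Ω → ℝ}
    (h : IndepFun X Z μ) (hX : AEStronglyMeasurable X μ) (u v : ζ → ℝ) :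
    cov μ (fun ω => X ω * u (Z ω)) (fun ω => v (Z ω)) =
      (∫ ω, X ω ∂μ) * cov μ (fun ω => u (Z ω)) (fun ω => v (Z ω)) := by
  have integral_mul_comp (w : ζ → ℝ) : ∫ ω, X ω * w (Z ω) ∂μ = (∫ ω, X ω ∂μ) * ∫ ω, w (Z ω) ∂μ :=
    (h.comp measurable_id (measurable_of_finite w)).integral_mul_eq_mul_integral hX
      ((measurable_of_finite w).comp hZ).aestronglyMeasurable
  have integral_mul_mul_comp : ∫ ω, X ω * u (Z ω) * v (Z ω) ∂μ =
      (∫ ω, X ω ∂μ) * ∫ ω, u (Z ω) * v (Z ω) ∂μ := by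
    simpa only [mul_assoc] using integral_mul_comp fun z => u z * v z
  simp only [cov, integral_mul_mul_comp, integral_mul_comp]
  ring

lemma cov_finset_sum_mul_comp {ι : Type*} (s : Finset ι) (hZ : Measurable Z) {X : ι → Ω → ℝ}
    (hX : ∀ i ∈ s, Integrable (X i) μ) (hind : ∀ i ∈ s, IndepFun (X i) Z μ)
    (u : ι → ζ → ℝ) (v : ζ → ℝ) :
    cov μ (fun ω => ∑ i ∈ s, X i ω * u i (Z ω)) (fun ω => v (Z ω)) =
      ∑ i ∈ s, (∫ ω, X i ω ∂μ) * cov μ (fun ω => u i (Z ω)) (fun ω => v (Z ω)) := by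
  rw [cov_finset_sum_left s (fun i hi => (hX i hi).mul_comp_of_fintype hZ (u i))
    (fun i hi => ((hX i hi).mul_comp_of_fintype hZ (u i)).mul_comp_of_fintype hZ v)]
  exact Finset.sum_congr rfl fun i hi =>
    (hind i hi).cov_mul_comp hZ (hX i hi).aestronglyMeasurable (u i) v

lemma cov_mul_apply_fiber_comp {β γ : Type*} [MeasurableSpace β] [MeasurableSpace γ]
    [MeasurableSingletonClass γ] [Fintype γ] (hZ : Measurable Z) {W : Ω → β}
    (hW : IndepFun W Z μ) {π : β → γ} (hπ : Measurable π) (hπW : Measurable fun ω => π (W ω))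
    {ψ : β → ℝ} (hψ : Measurable ψ) (hψW : Integrable (fun ω => ψ (W ω)) μ)
    (u : γ → ζ → ℝ) (v : ζ → ℝ) :
    cov μ (fun ω => ψ (W ω) * u (π (W ω)) (Z ω)) (fun ω => v (Z ω)) =
      ∑ g, (∫ ω in {ω | π (W ω) = g}, ψ (W ω) ∂μ) *
        cov μ (fun ω => u g (Z ω)) (fun ω => v (Z ω)) := by
  have hfiber (g : γ) : MeasurableSet {ω | π (W ω) = g} := hπW (measurableSet_singleton g)
  have hdecomp : (fun ω => ψ (W ω) * u (π (W ω)) (Z ω)) =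
      fun ω => ∑ g, {ω | π (W ω) = g}.indicator (fun ω => ψ (W ω)) ω * u g (Z ω) :=
    funext fun ω => (sum_indicator_fiber_mul (fun ω => π (W ω)) (fun ω => ψ (W ω))
      (fun g ω => u g (Z ω)) ω).symm
  rw [hdecomp, cov_finset_sum_mul_comp _ hZ (fun g _ => hψW.indicator (hfiber g))
    fun g _ => hW.comp (hψ.indicator (hπ (measurableSet_singleton g))) measurable_id]
  simp only [integral_indicator (hfiber _)]

end Covariance

lemma div_sum_eq_sum_weight_mul {γ : Type*} (s : Finset γ) (p c A : γ → ℝ)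
    (hA : ∀ g ∈ s, p g = 0 → A g = 0) :
    (∑ g ∈ s, A g * c g) / (∑ g ∈ s, p g * c g) =
      ∑ g ∈ s, (p g * c g / ∑ g' ∈ s, p g' * c g') * ((p g)⁻¹ * A g) := by
  rw [Finset.sum_div]
  refine Finset.sum_congr rfl fun g hg => ?_
  by_cases hpg : p g = 0
  · simp [hpg, hA g hg hpg]
  · field_simp

theorem stmt11_general {Ω : Type*} [MeasurableSpace Ω] (μ : Measure Ω) [IsProbabilityMeasure μ]
    {ζ γ : Type*} [MeasurableSpace ζ] [MeasurableSpace γ]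
    [Fintype ζ] [Fintype γ] [MeasurableSingletonClass ζ] [MeasurableSingletonClass γ]
    (Z : Ω → ζ) (G : Ω → γ) (hZm : Measurable Z) (hGm : Measurable G)
    (Dg : γ → ζ → ℝ)
    (Y1 Y0 : Ω → ℝ)
    (hY1i : Integrable Y1 μ) (hY0i : Integrable Y0 μ)
    (hindep : IndepFun (fun ω => (Y1 ω, Y0 ω, G ω)) Z μ)
    (h : ζ → ℝ) :
    cov μ (fun ω => Dg (G ω) (Z ω) * Y1 ω + (1 - Dg (G ω) (Z ω)) * Y0 ω)
        (fun ω => h (Z ω)) /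
      cov μ (fun ω => Dg (G ω) (Z ω)) (fun ω => h (Z ω)) =
    ∑ g, ((μ {ω | G ω = g}).toReal * cov μ (fun ω => Dg g (Z ω)) (fun ω => h (Z ω)) /
            ∑ g', (μ {ω | G ω = g'}).toReal *
              cov μ (fun ω => Dg g' (Z ω)) (fun ω => h (Z ω))) *
      ((μ {ω | G ω = g}).toReal⁻¹ * ∫ ω in {ω | G ω = g}, (Y1 ω - Y0 ω) ∂μ) := by
  have hπ : Measurable fun q : ℝ × ℝ × γ => q.2.2 := measurable_snd.comp measurable_snd
  have hDY : Integrable (fun ω => (Y1 ω - Y0 ω) * Dg (G ω) (Z ω)) μ :=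
    (hY1i.sub hY0i).mul_comp_of_fintype (hGm.prodMk hZm) fun p => Dg p.1 p.2
  have hY0indep : IndepFun Y0 (fun ω => h (Z ω)) μ :=
    hindep.comp measurable_snd.fst (measurable_of_finite h)
  have hcovY : cov μ (fun ω => Dg (G ω) (Z ω) * Y1 ω + (1 - Dg (G ω) (Z ω)) * Y0 ω)
      (fun ω => h (Z ω)) = ∑ g, (∫ ω in {ω | G ω = g}, (Y1 ω - Y0 ω) ∂μ) *
        cov μ (fun ω => Dg g (Z ω)) (fun ω => h (Z ω)) := by
    rw [show (fun ω => Dg (G ω) (Z ω) * Y1 ω + (1 - Dg (G ω) (Z ω)) * Y0 ω) =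
        fun ω => Y0 ω + (Y1 ω - Y0 ω) * Dg (G ω) (Z ω) from funext fun ω => by ring,
      cov_add_left hY0i hDY (hY0i.mul_comp_of_fintype hZm h) (hDY.mul_comp_of_fintype hZm h),
      hY0indep.cov_eq_zero hY0i.aestronglyMeasurable
        ((measurable_of_finite h).comp hZm).aestronglyMeasurable, zero_add]
    exact cov_mul_apply_fiber_comp hZm hindep hπ hGm (measurable_fst.sub measurable_snd.fst)
      (hY1i.sub hY0i) Dg h
  have hcovD : cov μ (fun ω => Dg (G ω) (Z ω)) (fun ω => h (Z ω)) =
      ∑ g, (μ {ω | G ω = g}).toReal * cov μ (fun ω => Dg g (Z ω)) (fun ω => h (Z ω)) := by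
    simpa only [one_mul, setIntegral_const, smul_eq_mul, mul_one, measureReal_def] using
      cov_mul_apply_fiber_comp (ψ := fun _ => 1) hZm hindep hπ hGm measurable_const
        (integrable_const 1) Dg h
  rw [hcovY, hcovD]
  exact div_sum_eq_sum_weight_mul _ _ _ _ fun g _ hg =>
    setIntegral_measure_zero _ ((measureReal_eq_zero_iff (measure_ne_top μ _)).1 hg)

/-- Proposition 5 (2SLS-like estimands): under exclusion/independence,
`Cov(Y, h(Z))/Cov(D, h(Z)) = ∑_g w_g Δ_g` with
`w_g = P(G=g)·Cov(D_g(Z),h(Z)) / ∑_{g'} P(G=g')·Cov(D_{g'}(Z),h(Z))` and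
`Δ_g = E[Y(1)−Y(0)|G=g]`, provided `Cov(D, h(Z)) ≠ 0`. -/
theorem stmt11 {Ω : Type*} [MeasurableSpace Ω] (μ : Measure Ω) [IsProbabilityMeasure μ]
    {ζ γ : Type*} [MeasurableSpace ζ] [MeasurableSpace γ]
    [Fintype ζ] [Fintype γ] [MeasurableSingletonClass ζ] [MeasurableSingletonClass γ]
    (Z : Ω → ζ) (G : Ω → γ) (hZm : Measurable Z) (hGm : Measurable G)
    (Dg : γ → ζ → ℝ) (hDg01 : ∀ g z, Dg g z = 0 ∨ Dg g z = 1)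
    (Y1 Y0 : Ω → ℝ) (hY1m : Measurable Y1) (hY0m : Measurable Y0)
    (hY1i : Integrable Y1 μ) (hY0i : Integrable Y0 μ)
    (hindep : IndepFun (fun ω => (Y1 ω, Y0 ω, G ω)) Z μ)
    (h : ζ → ℝ)
    (hden : cov μ (fun ω => Dg (G ω) (Z ω)) (fun ω => h (Z ω)) ≠ 0) :
    cov μ (fun ω => Dg (G ω) (Z ω) * Y1 ω + (1 - Dg (G ω) (Z ω)) * Y0 ω)
        (fun ω => h (Z ω)) /
      cov μ (fun ω => Dg (G ω) (Z ω)) (fun ω => h (Z ω)) =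
    ∑ g, ((μ {ω | G ω = g}).toReal * cov μ (fun ω => Dg g (Z ω)) (fun ω => h (Z ω)) /
            ∑ g', (μ {ω | G ω = g'}).toReal *
              cov μ (fun ω => Dg g' (Z ω)) (fun ω => h (Z ω))) *
      ((μ {ω | G ω = g}).toReal⁻¹ * ∫ ω in {ω | G ω = g}, (Y1 ω - Y0 ω) ∂μ) :=
  stmt11_general μ Z G hZm hGm Dg Y1 Y0 hY1i hY0i hindep h
end

section
/- Main identification theorem: under independence/exclusion, vector monotonicity, and full support of Z on {0,1}^J, for any weighting function c(g,z) satisfying Property M with P(C = 1) > 0, the conditional average treatment effect Δ_c = E[Y(1) − Y(0) | c(G, Z) = 1] equals E[h(Z)·Y] / E[h(Z)·D], where h(z) = λ'Σ^{−1}(Γ(z) − EΓ) and λ_S = E[c(g(S), Z)] for each nonempty S ⊆ {1,…,J}. -/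
open MeasureTheory ProbabilityTheory Matrix

/-- `Γ(z)`: the vector of subset products over nonempty subsets of `{1,…,J}`. -/
def GamB (J : ℕ) (z : Fin J → Bool) (S : {S : Finset (Fin J) // S.Nonempty}) : ℝ :=
  ∏ j ∈ S.1, if z j then 1 else 0

/-- `E[Γ(Z)]`. -/
noncomputable def EGamB {Ω : Type*} [MeasurableSpace Ω] (μ : Measure Ω) {J : ℕ}
    (Z : Ω → Fin J → Bool) (S : {S : Finset (Fin J) // S.Nonempty}) : ℝ :=
  ∫ ω, GamB J (Z ω) S ∂μ

/-- `Σ = Var(Γ(Z))`. -/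
noncomputable def SigB {Ω : Type*} [MeasurableSpace Ω] (μ : Measure Ω) {J : ℕ}
    (Z : Ω → Fin J → Bool) :
    Matrix {S : Finset (Fin J) // S.Nonempty} {S : Finset (Fin J) // S.Nonempty} ℝ :=
  Matrix.of fun S T =>
    ∫ ω, (GamB J (Z ω) S - EGamB μ Z S) * (GamB J (Z ω) T - EGamB μ Z T) ∂μ

/-- `h(z) = λ'Σ⁻¹(Γ(z) − EΓ)`. -/
noncomputable def hB {Ω : Type*} [MeasurableSpace Ω] (μ : Measure Ω) {J : ℕ}
    (Z : Ω → Fin J → Bool) (lam : {S : Finset (Fin J) // S.Nonempty} → ℝ)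
    (z : Fin J → Bool) : ℝ :=
  lam ⬝ᵥ ((SigB μ Z)⁻¹ *ᵥ fun S => GamB J z S - EGamB μ Z S)

/-- The indicator vector of a subset `S`. -/
def chi {J : ℕ} (S : Finset (Fin J)) : Fin J → Bool := fun j => decide (j ∈ S)

/-- The Sperner family `F(g)` of a monotone boolean function `g`: its minimal
treatment-inducing sets of instruments. -/
def spernerOf {J : ℕ} (g : (Fin J → Bool) → Bool) : Finset (Finset (Fin J)) :=
  Finset.univ.filter fun S =>
    g (chi S) = true ∧ ∀ T ⊆ S, T ≠ S → g (chi T) = false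

/-- The inclusion-exclusion coefficient `M_{F,S'} = ∑_{f ⊆ F, ∪f = S'} (−1)^{|f|+1}`. -/
def Mcoef {J : ℕ} (F : Finset (Finset (Fin J))) (S' : Finset (Fin J)) : ℝ :=
  ∑ f ∈ F.powerset.filter (fun f => f.Nonempty ∧ f.sup id = S'),
    (-1 : ℝ) ^ (f.card + 1)

/-- Property M for a weighting function `c : G × Z → {0,1}`: `c` vanishes on
always-takers and never-takers, and for every other compliance group `g` the values
`c(g,·)` are the `M`-linear combination of the values at the simple groups `g(S)`. -/
def PropM {J : ℕ} {γ : Type*} (Dg : γ → (Fin J → Bool) → Bool)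
    (gS : Finset (Fin J) → γ) (c : γ → (Fin J → Bool) → ℝ) : Prop :=
  (∀ g z, c g z = 0 ∨ c g z = 1) ∧
  (∀ g, Dg g = (fun _ => true) → ∀ z, c g z = 0) ∧
  (∀ g, Dg g = (fun _ => false) → ∀ z, c g z = 0) ∧
  (∀ g, Dg g ≠ (fun _ => true) → Dg g ≠ (fun _ => false) → ∀ z,
    c g z = ∑ S' ∈ Finset.univ.filter (fun S' : Finset (Fin J) => S'.Nonempty),
      Mcoef (spernerOf (Dg g)) S' * c (gS S') z)

/-!
Because `(Y(1), Y(0), G) ⊥ Z`, every expectation in the statement factors through group-level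
averages over `Z`. With `κ g = E[c(g, Z)]`, the conditional effect is
`E[(Y(1) − Y(0)) κ(G)] / E[κ(G)]` (as `c` is `{0,1}`-valued), and writing
`h(Z) Y = (Y(1) − Y(0)) h(Z) D_G(Z) + Y(0) h(Z)` with `E[h(Z)] = 0` shows that the Wald-type
ratio has the same form as soon as `E[h(Z) D_g(Z)] = κ g` for every group `g`.

That identity is where `h` comes from. Full support makes `Σ = Bᵀ diag(P(Z = z)) B` positive
definite, `B` having rows `Γ(z) − EΓ`, which are linearly independent because the subset
products are unitriangular in the subset order; then `E[h(Z)] = 0` and `E[h(Z) Γ_S(Z)] = λ_S`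
for every `S`, which settles always-takers. For any other group, inclusion–exclusion over the
Sperner family gives `D_g = ∑_S M_{F(g),S} Γ_S`, and Property M writes `c(g, ·)` with the same
coefficients over the simple groups `g(S)`, whose averages are the `λ_S`.
-/

section FiniteValued

variable {Ω β : Type*} [MeasurableSpace Ω] {μ : Measure Ω}
  [Fintype β] [MeasurableSpace β] [MeasurableSingletonClass β] {Z : Ω → β}

lemma integral_comp_eq_sum_measureReal [IsFiniteMeasure μ] (hZ : Measurable Z) (f : β → ℝ) :
    ∫ ω, f (Z ω) ∂μ = ∑ z, μ.real {ω | Z ω = z} * f z := by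
  rw [← integral_map hZ.aemeasurable (measurable_of_countable f).aestronglyMeasurable,
    integral_fintype .of_finite]
  refine Finset.sum_congr rfl fun z _ => ?_
  rw [map_measureReal_apply hZ (measurableSet_singleton z), smul_eq_mul]
  rfl

lemma sum_measureReal_fiber [IsProbabilityMeasure μ] (hZ : Measurable Z) :
    ∑ z, μ.real {ω | Z ω = z} = 1 := by
  simpa using (integral_comp_eq_sum_measureReal (μ := μ) hZ fun _ => (1 : ℝ)).symm

lemma MeasureTheory.Integrable.mul_comp_of_finite_s13 {f : Ω → ℝ} (hf : Integrable f μ)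
    (hZ : Measurable Z) (k : β → ℝ) : Integrable (fun ω => f ω * k (Z ω)) μ :=
  hf.mul_bdd ((measurable_of_countable k).comp hZ).aestronglyMeasurable (c := ∑ z, ‖k z‖)
    (ae_of_all _ fun ω =>
      Finset.single_le_sum (fun z _ => norm_nonneg (k z)) (Finset.mem_univ (Z ω)))

lemma integrable_comp_of_finite_s13 [IsFiniteMeasure μ] (hZ : Measurable Z) (k : β → ℝ) :
    Integrable (fun ω => k (Z ω)) μ :=
  Integrable.of_finite.comp_measurable hZ

variable {α γ : Type*} [MeasurableSpace α] [Fintype γ] [MeasurableSpace γ]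
  [MeasurableSingletonClass γ] {V : Ω → α} {π : α → γ} {u : α → ℝ}

lemma integral_mul_comp_eq_sum_of_indepFun [DecidableEq γ] (hV : Measurable V) (hZ : Measurable Z)
    (hVZ : IndepFun V Z μ) (hπ : Measurable π) (hu : Measurable u)
    (hui : Integrable (fun ω => u (V ω)) μ) (k : γ → β → ℝ) :
    ∫ ω, u (V ω) * k (π (V ω)) (Z ω) ∂μ =
      ∑ g, (∫ ω, u (V ω) * (if π (V ω) = g then 1 else 0) ∂μ) *
        ∫ ω, k g (Z ω) ∂μ := by
  have hsplit : ∀ ω, u (V ω) * k (π (V ω)) (Z ω) =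
      ∑ g, u (V ω) * (if π (V ω) = g then 1 else 0) * k g (Z ω) := fun ω => by
    simp [Finset.sum_ite_eq]
  have hgroup : ∀ g, Integrable (fun ω => u (V ω) * (if π (V ω) = g then 1 else 0)) μ :=
    fun g => hui.mul_comp_of_finite_s13 (hπ.comp hV) fun g' => if g' = g then 1 else 0
  rw [integral_congr_ae (ae_of_all _ hsplit),
    integral_finsetSum _ fun g _ => (hgroup g).mul_comp_of_finite_s13 hZ (k g)]
  refine Finset.sum_congr rfl fun g _ => ?_
  have hφ : Measurable fun t => u t * if π t = g then (1 : ℝ) else 0 :=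
    hu.mul ((measurable_of_countable fun g' => if g' = g then (1 : ℝ) else 0).comp hπ)
  exact (hVZ.comp hφ (measurable_of_countable (k g))).integral_fun_mul_eq_mul_integral
    (hgroup g).aestronglyMeasurable
    ((measurable_of_countable (k g)).comp hZ).aestronglyMeasurable

lemma integral_mul_comp_eq_integral_mul_integral_of_indepFun [IsProbabilityMeasure μ]
    (hV : Measurable V) (hZ : Measurable Z) (hVZ : IndepFun V Z μ) (hπ : Measurable π)
    (hu : Measurable u) (hui : Integrable (fun ω => u (V ω)) μ) (k : γ → β → ℝ) :
    ∫ ω, u (V ω) * k (π (V ω)) (Z ω) ∂μ =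
      ∫ ω, u (V ω) * ∫ ω', k (π (V ω)) (Z ω') ∂μ ∂μ := by
  classical
  rw [integral_mul_comp_eq_sum_of_indepFun hV hZ hVZ hπ hu hui k,
    integral_mul_comp_eq_sum_of_indepFun hV hZ hVZ hπ hu hui fun g _ => ∫ ω', k g (Z ω') ∂μ]
  simp

end FiniteValued

lemma setIntegral_eq_integral_mul_of_zero_or_one {Ω : Type*} [MeasurableSpace Ω]
    {μ : Measure Ω} {b : Ω → ℝ} (hb : Measurable b) (h01 : ∀ ω, b ω = 0 ∨ b ω = 1)
    (f : Ω → ℝ) : ∫ ω in {ω | b ω = 1}, f ω ∂μ = ∫ ω, f ω * b ω ∂μ := by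
  have hs : MeasurableSet {ω | b ω = 1} := hb (measurableSet_singleton 1)
  rw [← integral_indicator hs]
  congr 1
  funext ω
  rcases h01 ω with h | h <;> simp [h]

section PotentialOutcomes

variable {Ω β γ : Type*} [MeasurableSpace Ω] {μ : Measure Ω} [IsProbabilityMeasure μ]
  [Fintype β] [MeasurableSpace β] [MeasurableSingletonClass β]
  [Fintype γ] [MeasurableSpace γ] [MeasurableSingletonClass γ]
  {Z : Ω → β} {G : Ω → γ} {Y1 Y0 : Ω → ℝ}

lemma integral_comp_eq_integral_integral_of_indepFun (hG : Measurable G) (hZ : Measurable Z)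
    (hGZ : IndepFun G Z μ) (k : γ → β → ℝ) :
    ∫ ω, k (G ω) (Z ω) ∂μ = ∫ ω, ∫ ω', k (G ω) (Z ω') ∂μ ∂μ := by
  simpa using integral_mul_comp_eq_integral_mul_integral_of_indepFun hG hZ hGZ measurable_id
    (u := fun _ => 1) measurable_const (integrable_const 1) k

lemma integral_effect_mul_comp_eq (hY1 : Measurable Y1) (hY0 : Measurable Y0)
    (hG : Measurable G) (hZ : Measurable Z) (hY1i : Integrable Y1 μ) (hY0i : Integrable Y0 μ)
    (hindep : IndepFun (fun ω => (Y1 ω, Y0 ω, G ω)) Z μ) (k : γ → β → ℝ) :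
    ∫ ω, (Y1 ω - Y0 ω) * k (G ω) (Z ω) ∂μ =
      ∫ ω, (Y1 ω - Y0 ω) * ∫ ω', k (G ω) (Z ω') ∂μ ∂μ :=
  integral_mul_comp_eq_integral_mul_integral_of_indepFun (hY1.prodMk (hY0.prodMk hG)) hZ hindep
    measurable_snd.snd (u := fun t => t.1 - t.2.1) (by fun_prop) (hY1i.sub hY0i) k

lemma integral_mul_observed_outcome_eq (hY1 : Measurable Y1) (hY0 : Measurable Y0)
    (hG : Measurable G) (hZ : Measurable Z) (hY1i : Integrable Y1 μ) (hY0i : Integrable Y0 μ)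
    (hindep : IndepFun (fun ω => (Y1 ω, Y0 ω, G ω)) Z μ) {h : β → ℝ}
    (hh : ∫ ω, h (Z ω) ∂μ = 0) (D : γ → β → Bool) :
    ∫ ω, h (Z ω) * ((if D (G ω) (Z ω) then 1 else 0) * Y1 ω +
        (1 - if D (G ω) (Z ω) then 1 else 0) * Y0 ω) ∂μ =
      ∫ ω, (Y1 ω - Y0 ω) *
        ∫ ω', h (Z ω') * (if D (G ω) (Z ω') then 1 else 0) ∂μ ∂μ := by
  have hsplit : ∀ ω, h (Z ω) * ((if D (G ω) (Z ω) then 1 else 0) * Y1 ω +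
        (1 - if D (G ω) (Z ω) then 1 else 0) * Y0 ω) =
      (Y1 ω - Y0 ω) * (h (Z ω) * if D (G ω) (Z ω) then 1 else 0) + Y0 ω * h (Z ω) :=
    fun ω => by ring
  have hbaseline : ∫ ω, Y0 ω * h (Z ω) ∂μ = 0 := by
    rw [integral_mul_comp_eq_integral_mul_integral_of_indepFun (hY1.prodMk (hY0.prodMk hG)) hZ
      hindep measurable_snd.snd (u := fun t => t.2.1) (by fun_prop) hY0i fun _ z => h z]
    simp only [hh, mul_zero, integral_zero]
  have hint : Integrable
      (fun ω => (Y1 ω - Y0 ω) * (h (Z ω) * if D (G ω) (Z ω) then 1 else 0)) μ :=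
    (hY1i.sub hY0i).mul_comp_of_finite_s13 (hG.prodMk hZ) fun p => h p.2 * if D p.1 p.2 then 1 else 0
  rw [integral_congr_ae (ae_of_all _ hsplit),
    integral_add hint (hY0i.mul_comp_of_finite_s13 hZ h), hbaseline, add_zero]
  exact integral_effect_mul_comp_eq hY1 hY0 hG hZ hY1i hY0i hindep
    fun g z => h z * if D g z then 1 else 0

lemma setIntegral_effect_eq {c : γ → β → ℝ} (hc : ∀ g z, c g z = 0 ∨ c g z = 1)
    (hY1 : Measurable Y1) (hY0 : Measurable Y0) (hG : Measurable G) (hZ : Measurable Z)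
    (hY1i : Integrable Y1 μ) (hY0i : Integrable Y0 μ)
    (hindep : IndepFun (fun ω => (Y1 ω, Y0 ω, G ω)) Z μ) :
    ∫ ω in {ω | c (G ω) (Z ω) = 1}, (Y1 ω - Y0 ω) ∂μ =
      ∫ ω, (Y1 ω - Y0 ω) * ∫ ω', c (G ω) (Z ω') ∂μ ∂μ := by
  have hC : Measurable fun ω => c (G ω) (Z ω) :=
    (measurable_of_countable fun p : γ × β => c p.1 p.2).comp (hG.prodMk hZ)
  rw [setIntegral_eq_integral_mul_of_zero_or_one hC fun _ => hc _ _]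
  exact integral_effect_mul_comp_eq hY1 hY0 hG hZ hY1i hY0i hindep c

lemma measure_toReal_eq_integral_integral {c : γ → β → ℝ}
    (hc : ∀ g z, c g z = 0 ∨ c g z = 1)
    (hG : Measurable G) (hZ : Measurable Z) (hGZ : IndepFun G Z μ) :
    (μ {ω | c (G ω) (Z ω) = 1}).toReal = ∫ ω, ∫ ω', c (G ω) (Z ω') ∂μ ∂μ := by
  have hC : Measurable fun ω => c (G ω) (Z ω) :=
    (measurable_of_countable fun p : γ × β => c p.1 p.2).comp (hG.prodMk hZ)
  have hmass := setIntegral_eq_integral_mul_of_zero_or_one (μ := μ) hC (fun _ => hc _ _)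
    fun _ => 1
  rw [setIntegral_const, smul_eq_mul, mul_one] at hmass
  rw [← measureReal_def, hmass, ← integral_comp_eq_integral_integral_of_indepFun hG hZ hGZ c]
  simp only [one_mul]

end PotentialOutcomes

section Boolean

variable {J : ℕ}

lemma chi_mono {S T : Finset (Fin J)} (h : S ⊆ T) : chi S ≤ chi T := fun j => by
  by_cases hj : j ∈ S
  · simp [chi, hj, h hj]
  · simp [chi, hj]

lemma chi_filter_eq_true (z : Fin J → Bool) : chi {j | z j = true} = z := by
  funext j
  simp [chi]

lemma chi_empty : chi (∅ : Finset (Fin J)) = fun _ => false := by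
  funext j
  simp [chi]

lemma GamB_chi (T : Finset (Fin J)) (S : {S : Finset (Fin J) // S.Nonempty}) :
    GamB J (chi T) S = if S.1 ⊆ T then 1 else 0 := by
  simp [GamB, chi, Finset.prod_boole, Finset.subset_iff]

lemma eq_fun_true_of_monotone {g : (Fin J → Bool) → Bool} (hg : Monotone g)
    (h : g (fun _ => false) = true) : g = fun _ => true := by
  funext z
  have hle := hg (show (fun _ => false) ≤ z from fun j => Bool.false_le (z j))
  rw [h] at hle
  exact top_le_iff.mp hle

lemma exists_mem_spernerOf_subset {g : (Fin J → Bool) → Bool} (T : Finset (Fin J))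
    (hT : g (chi T) = true) : ∃ U ∈ spernerOf g, U ⊆ T := by
  induction T using Finset.strongInduction with
  | H T ih =>
    by_cases hmin : ∀ V ⊆ T, V ≠ T → g (chi V) = false
    · exact ⟨T, Finset.mem_filter.2 ⟨Finset.mem_univ T, hT, hmin⟩, subset_rfl⟩
    · push Not at hmin
      obtain ⟨V, hVT, hVne, hV⟩ := hmin
      obtain ⟨U, hU, hUV⟩ := ih V (Finset.ssubset_iff_subset_ne.2 ⟨hVT, hVne⟩)
        (by simpa using hV)
      exact ⟨U, hU, hUV.trans hVT⟩

lemma eq_true_iff_exists_mem_spernerOf_subset {g : (Fin J → Bool) → Bool} (hg : Monotone g)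
    (T : Finset (Fin J)) :
    g (chi T) = true ↔ ∃ U ∈ spernerOf g, U ⊆ T := by
  refine ⟨exists_mem_spernerOf_subset T, fun ⟨U, hU, hUT⟩ => ?_⟩
  have hle := hg (chi_mono hUT)
  rw [(Finset.mem_filter.1 hU).2.1] at hle
  exact top_le_iff.mp hle

end Boolean

section InclusionExclusion

lemma sum_powerset_filter_nonempty_neg_one_pow {α : Type*} (s : Finset α) :
    ∑ f ∈ s.powerset with f.Nonempty, (-1 : ℝ) ^ (f.card + 1) =
      if s.Nonempty then 1 else 0 := by
  classical
  rcases s.eq_empty_or_nonempty with rfl | hs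
  · simp [Finset.filter_singleton]
  · have hsum : ∑ f ∈ s.powerset, (-1 : ℝ) ^ f.card = 0 := by
      exact_mod_cast Finset.sum_powerset_neg_one_pow_card_of_nonempty hs
    rw [← Finset.sum_filter_add_sum_filter_not s.powerset (·.Nonempty)] at hsum
    have hempty : {f ∈ s.powerset | ¬f.Nonempty} = {∅} := by
      ext f
      simp only [Finset.mem_filter, Finset.mem_powerset, Finset.not_nonempty_iff_eq_empty,
        Finset.mem_singleton, and_iff_right_iff_imp]
      rintro rfl
      exact Finset.empty_subset s
    simp only [hempty, Finset.sum_singleton, Finset.card_empty, pow_zero] at hsum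
    simp only [pow_succ, mul_neg_one, Finset.sum_neg_distrib, if_pos hs]
    linarith

variable {J : ℕ}

lemma sum_Mcoef_mul_boole_subset (F : Finset (Finset (Fin J))) (T : Finset (Fin J)) :
    ∑ S, Mcoef F S * (if S ⊆ T then 1 else 0) = if ∃ U ∈ F, U ⊆ T then 1 else 0 := by
  calc ∑ S, Mcoef F S * (if S ⊆ T then 1 else 0)
      = ∑ S, ∑ f ∈ F.powerset with f.Nonempty ∧ f.sup id = S,
          (-1 : ℝ) ^ (f.card + 1) * (if f.sup id ⊆ T then 1 else 0) := by
        refine Finset.sum_congr rfl fun S _ => ?_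
        rw [Mcoef, Finset.sum_mul]
        refine Finset.sum_congr rfl fun f hf => ?_
        rw [(Finset.mem_filter.1 hf).2.2]
    _ = ∑ f ∈ F.powerset with f.Nonempty,
          (-1 : ℝ) ^ (f.card + 1) * (if f.sup id ⊆ T then 1 else 0) := by
        rw [← Finset.sum_fiberwise _ (fun f : Finset (Finset (Fin J)) => f.sup id)]
        simp only [Finset.filter_filter]
    _ = ∑ f ∈ (F.filter (· ⊆ T)).powerset with f.Nonempty, (-1 : ℝ) ^ (f.card + 1) := by
        simp only [mul_boole, ← Finset.sum_filter, Finset.filter_filter]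
        congr 1
        ext f
        simp only [Finset.mem_filter, Finset.mem_powerset, Finset.sup_le_iff, id,
          Finset.subset_iff (s₁ := f)]
        exact ⟨fun ⟨hF, hne, hT⟩ => ⟨fun x hx => ⟨hF hx, hT x hx⟩, hne⟩,
          fun ⟨hF, hne⟩ => ⟨fun x hx => (hF hx).1, hne, fun x hx => (hF hx).2⟩⟩
    _ = if ∃ U ∈ F, U ⊆ T then 1 else 0 := by
        simp only [sum_powerset_filter_nonempty_neg_one_pow, Finset.filter_nonempty_iff]

lemma Mcoef_empty {F : Finset (Finset (Fin J))} (hF : ∅ ∉ F) : Mcoef F ∅ = 0 := by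
  refine Finset.sum_eq_zero fun f hf => ?_
  obtain ⟨hfF, ⟨U, hU⟩, hsup⟩ := by simpa using hf
  have hUsup : U ⊆ f.sup id := Finset.le_sup (f := id) hU
  rw [hsup, Finset.subset_empty] at hUsup
  exact (hF (hUsup ▸ hfF hU)).elim

lemma boole_eq_sum_Mcoef_mul_prod {g : (Fin J → Bool) → Bool} (hg : Monotone g)
    (hg0 : g (fun _ => false) = false) (z : Fin J → Bool) :
    (if g z = true then 1 else 0) =
      ∑ S ∈ Finset.univ.filter (fun S : Finset (Fin J) => S.Nonempty),
        Mcoef (spernerOf g) S * ∏ j ∈ S, (if z j then 1 else 0) := by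
  have hempty : Mcoef (spernerOf g) ∅ = 0 := Mcoef_empty fun h => by
    simpa [chi_empty, hg0] using (Finset.mem_filter.1 h).2.1
  rw [Finset.sum_filter_of_ne fun S _ h => Finset.nonempty_iff_ne_empty.2 <| by
    rintro rfl; simp [hempty] at h]
  have key := sum_Mcoef_mul_boole_subset (spernerOf g) {j | z j = true}
  simp only [← eq_true_iff_exists_mem_spernerOf_subset hg, chi_filter_eq_true] at key
  rw [← key]
  simp [Finset.prod_boole, Finset.subset_iff]

end InclusionExclusion

section Covariance

lemma eq_zero_of_forall_sum_subset_eq_zero {α : Type*} [Fintype α] [DecidableEq α]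
    {v : {S : Finset α // S.Nonempty} → ℝ}
    (h : ∀ T, ∑ S, (if S.1 ⊆ T then v S else 0) = 0) :
    v = 0 := by
  funext ⟨T, hT⟩
  induction T using Finset.strongInduction with
  | H T ih =>
    have hT' := h T
    rw [Finset.sum_eq_single ⟨T, hT⟩ (fun S _ hS => ?_) (by simp)] at hT'
    · simpa using hT'
    · split_ifs with hST
      · exact ih S.1 (Finset.ssubset_iff_subset_ne.2 ⟨hST, fun h => hS (Subtype.ext h)⟩) S.2
      · rfl

variable {J : ℕ}

def centeredGamB (e : {S : Finset (Fin J) // S.Nonempty} → ℝ) :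
    Matrix (Fin J → Bool) {S : Finset (Fin J) // S.Nonempty} ℝ :=
  Matrix.of fun z S => GamB J z S - e S

lemma mulVec_centeredGamB_injective (e : {S : Finset (Fin J) // S.Nonempty} → ℝ) :
    Function.Injective (centeredGamB e).mulVec := by
  suffices hker : ∀ v, centeredGamB e *ᵥ v = 0 → v = 0 from fun v w h =>
    sub_eq_zero.1 (hker _ (by rw [Matrix.mulVec_sub, h, sub_self]))
  intro v hv
  have hrow : ∀ T, ∑ S, (if S.1 ⊆ T then v S else 0) = ∑ S, e S * v S := fun T => by
    have := congrFun hv (chi T)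
    simpa [Matrix.mulVec, dotProduct, centeredGamB, GamB_chi, sub_mul, Finset.sum_sub_distrib,
      sub_eq_zero] using this
  have hconst : ∑ S, e S * v S = 0 := by
    rw [← hrow ∅]
    exact Finset.sum_eq_zero fun S _ => if_neg fun h => S.2.ne_empty (Finset.subset_empty.1 h)
  exact eq_zero_of_forall_sum_subset_eq_zero fun T => (hrow T).trans hconst

variable {Ω : Type*} [MeasurableSpace Ω] {μ : Measure Ω} {Z : Ω → Fin J → Bool}

lemma EGamB_eq_sum [IsFiniteMeasure μ] (hZ : Measurable Z)
    (S : {S : Finset (Fin J) // S.Nonempty}) :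
    EGamB μ Z S = ∑ z, μ.real {ω | Z ω = z} * GamB J z S :=
  integral_comp_eq_sum_measureReal hZ fun z => GamB J z S

lemma SigB_eq [IsFiniteMeasure μ] (hZ : Measurable Z) :
    SigB μ Z = (centeredGamB (EGamB μ Z))ᵀ * diagonal (fun z => μ.real {ω | Z ω = z}) *
      centeredGamB (EGamB μ Z) := by
  ext S T
  refine (integral_comp_eq_sum_measureReal hZ
    fun z => (GamB J z S - EGamB μ Z S) * (GamB J z T - EGamB μ Z T)).trans ?_
  rw [Matrix.mul_apply]
  simp only [Matrix.mul_diagonal, transpose_apply, centeredGamB, of_apply]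
  exact Finset.sum_congr rfl fun z _ => by ring

lemma isUnit_SigB [IsFiniteMeasure μ] (hZ : Measurable Z)
    (hfull : ∀ z, 0 < μ {ω | Z ω = z}) : IsUnit (SigB μ Z) := by
  rw [SigB_eq hZ, ← conjTranspose_eq_transpose_of_trivial]
  exact (PosDef.conjTranspose_mul_mul_same
    (posDef_diagonal_iff.2 fun z => ENNReal.toReal_pos (hfull z).ne' (measure_ne_top μ _))
    (mulVec_centeredGamB_injective _)).isUnit

lemma hB_eq_mulVec (lam : {S : Finset (Fin J) // S.Nonempty} → ℝ) (z : Fin J → Bool) :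
    hB μ Z lam z = (centeredGamB (EGamB μ Z) *ᵥ (lam ᵥ* (SigB μ Z)⁻¹)) z := by
  rw [hB, dotProduct_mulVec, dotProduct_comm]
  rfl

lemma vecMul_centeredGamB_eq_zero [IsProbabilityMeasure μ] (hZ : Measurable Z) :
    (fun z => μ.real {ω | Z ω = z}) ᵥ* centeredGamB (EGamB μ Z) = 0 := by
  funext S
  simp only [vecMul, dotProduct, centeredGamB, of_apply, mul_sub, Finset.sum_sub_distrib,
    ← Finset.sum_mul, sum_measureReal_fiber hZ, one_mul, ← EGamB_eq_sum hZ, sub_self,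
    Pi.zero_apply]

lemma integral_hB [IsProbabilityMeasure μ] (hZ : Measurable Z)
    (lam : {S : Finset (Fin J) // S.Nonempty} → ℝ) : ∫ ω, hB μ Z lam (Z ω) ∂μ = 0 := by
  rw [integral_comp_eq_sum_measureReal hZ (hB μ Z lam)]
  simp only [hB_eq_mulVec]
  change _ ⬝ᵥ _ = _
  rw [dotProduct_mulVec, vecMul_centeredGamB_eq_zero hZ, zero_dotProduct]

lemma weighted_hB_vecMul_centeredGamB [IsFiniteMeasure μ] (hZ : Measurable Z)
    (hfull : ∀ z, 0 < μ {ω | Z ω = z}) (lam : {S : Finset (Fin J) // S.Nonempty} → ℝ) :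
    (fun z => μ.real {ω | Z ω = z} * hB μ Z lam z) ᵥ* centeredGamB (EGamB μ Z) = lam := by
  have hweights : (fun z => μ.real {ω | Z ω = z} * hB μ Z lam z) =
      (lam ᵥ* (SigB μ Z)⁻¹ ᵥ* (centeredGamB (EGamB μ Z))ᵀ) ᵥ*
        diagonal (fun z => μ.real {ω | Z ω = z}) := by
    funext z
    rw [vecMul_diagonal, vecMul_transpose, hB_eq_mulVec, mul_comm]
  rw [hweights, vecMul_vecMul, vecMul_vecMul, ← Matrix.mul_assoc, ← SigB_eq hZ, vecMul_vecMul,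
    nonsing_inv_mul _ ((isUnit_iff_isUnit_det _).1 (isUnit_SigB hZ hfull)), vecMul_one]

lemma integral_hB_mul_GamB [IsProbabilityMeasure μ] (hZ : Measurable Z)
    (hfull : ∀ z, 0 < μ {ω | Z ω = z}) (lam : {S : Finset (Fin J) // S.Nonempty} → ℝ)
    (T : {S : Finset (Fin J) // S.Nonempty}) :
    ∫ ω, hB μ Z lam (Z ω) * GamB J (Z ω) T ∂μ = lam T := by
  have hmean : ∑ z, μ.real {ω | Z ω = z} * hB μ Z lam z = 0 :=
    (integral_comp_eq_sum_measureReal hZ _).symm.trans (integral_hB hZ lam)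
  refine (integral_comp_eq_sum_measureReal hZ fun z => hB μ Z lam z * GamB J z T).trans ?_
  conv_rhs => rw [← weighted_hB_vecMul_centeredGamB hZ hfull lam]
  simp only [vecMul, dotProduct, centeredGamB, of_apply, mul_sub, Finset.sum_sub_distrib,
    ← Finset.sum_mul, hmean, zero_mul, sub_zero]
  simp only [mul_assoc]

end Covariance

section Identification

variable {Ω : Type*} [MeasurableSpace Ω] {μ : Measure Ω} [IsProbabilityMeasure μ] {J : ℕ}
  {Z : Ω → Fin J → Bool} {γ : Type*} {Dg : γ → (Fin J → Bool) → Bool}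
  {gS : Finset (Fin J) → γ} {c : γ → (Fin J → Bool) → ℝ}

lemma integral_hB_mul_boole_eq_integral (hZ : Measurable Z) (hfull : ∀ z, 0 < μ {ω | Z ω = z})
    (hVM : ∀ g, Monotone (Dg g)) (hM : PropM Dg gS c) (g : γ) :
    ∫ ω, hB μ Z (fun S => ∫ ω', c (gS S.1) (Z ω') ∂μ) (Z ω) *
        (if Dg g (Z ω) = true then 1 else 0) ∂μ = ∫ ω, c g (Z ω) ∂μ := by
  obtain ⟨-, hat, hnt, hmix⟩ := hM
  by_cases hat' : Dg g = fun _ => true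
  · simp [hat', hat g hat', integral_hB hZ]
  by_cases hnt' : Dg g = fun _ => false
  · simp [hnt', hnt g hnt']
  have hg0 : Dg g (fun _ => false) = false := by
    by_contra h
    exact hat' (eq_fun_true_of_monotone (hVM g) (by simpa using h))
  set lam : {S : Finset (Fin J) // S.Nonempty} → ℝ := fun S => ∫ ω', c (gS S.1) (Z ω') ∂μ
  set M := Mcoef (spernerOf (Dg g))
  calc ∫ ω, hB μ Z lam (Z ω) * (if Dg g (Z ω) = true then 1 else 0) ∂μ
      = ∫ ω, ∑ S ∈ Finset.univ.filter (fun S : Finset (Fin J) => S.Nonempty),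
          M S * (hB μ Z lam (Z ω) * ∏ j ∈ S, (if Z ω j then 1 else 0)) ∂μ := by
        congr 1
        funext ω
        rw [boole_eq_sum_Mcoef_mul_prod (hVM g) hg0, Finset.mul_sum]
        exact Finset.sum_congr rfl fun S _ => by ring
    _ = ∑ S ∈ Finset.univ.filter (fun S : Finset (Fin J) => S.Nonempty),
          M S * ∫ ω, c (gS S) (Z ω) ∂μ := by
        rw [integral_finsetSum _ fun S _ => integrable_comp_of_finite_s13 hZ
          fun z => M S * (hB μ Z lam z * ∏ j ∈ S, (if z j then 1 else 0))]
        refine Finset.sum_congr rfl fun S hS => ?_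
        rw [integral_const_mul]
        congr 1
        exact integral_hB_mul_GamB hZ hfull lam ⟨S, (Finset.mem_filter.1 hS).2⟩
    _ = ∫ ω, c g (Z ω) ∂μ := by
        simp only [hmix g hat' hnt']
        rw [integral_finsetSum _ fun S _ => integrable_comp_of_finite_s13 hZ
          fun z => M S * c (gS S) z]
        simp only [integral_const_mul]

end Identification

theorem stmt13_general {Ω : Type*} [MeasurableSpace Ω] (μ : Measure Ω) [IsProbabilityMeasure μ]
    {J : ℕ} (Z : Ω → Fin J → Bool) (hZm : Measurable Z)
    (hfull : ∀ z : Fin J → Bool, 0 < μ {ω | Z ω = z})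
    {γ : Type*} [Fintype γ] [MeasurableSpace γ] [MeasurableSingletonClass γ]
    (G : Ω → γ) (hGm : Measurable G)
    (Dg : γ → (Fin J → Bool) → Bool) (hVM : ∀ g, Monotone (Dg g))
    (gS : Finset (Fin J) → γ)
    (Y1 Y0 : Ω → ℝ) (hY1m : Measurable Y1) (hY0m : Measurable Y0)
    (hY1i : Integrable Y1 μ) (hY0i : Integrable Y0 μ)
    (hindep : IndepFun (fun ω => (Y1 ω, Y0 ω, G ω)) Z μ)
    (c : γ → (Fin J → Bool) → ℝ) (hM : PropM Dg gS c) :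
    (μ {ω | c (G ω) (Z ω) = 1}).toReal⁻¹ *
        ∫ ω in {ω | c (G ω) (Z ω) = 1}, (Y1 ω - Y0 ω) ∂μ =
      (∫ ω, hB μ Z (fun S => ∫ ω', c (gS S.1) (Z ω') ∂μ) (Z ω) *
          ((if Dg (G ω) (Z ω) = true then (1 : ℝ) else 0) * Y1 ω +
            (1 - if Dg (G ω) (Z ω) = true then (1 : ℝ) else 0) * Y0 ω) ∂μ) /
      (∫ ω, hB μ Z (fun S => ∫ ω', c (gS S.1) (Z ω') ∂μ) (Z ω) *
          (if Dg (G ω) (Z ω) = true then (1 : ℝ) else 0) ∂μ) := by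
  have hGZ : IndepFun G Z μ := hindep.comp measurable_snd.snd measurable_id
  have hgroup := integral_hB_mul_boole_eq_integral hZm hfull hVM hM
  rw [setIntegral_effect_eq hM.1 hY1m hY0m hGm hZm hY1i hY0i hindep,
    measure_toReal_eq_integral_integral hM.1 hGm hZm hGZ,
    integral_mul_observed_outcome_eq hY1m hY0m hGm hZm hY1i hY0i hindep (integral_hB hZm _),
    integral_comp_eq_integral_integral_of_indepFun hGm hZm hGZ
      fun g z => hB μ Z (fun S => ∫ ω', c (gS S.1) (Z ω') ∂μ) z * if Dg g z then 1 else 0]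
  simp only [hgroup]
  exact inv_mul_eq_div _ _

/-- Theorem 1 (main identification result, for average treatment effects): under
independence/exclusion, vector monotonicity, and full support of `Z` on `{0,1}^J`,
for any weighting function `c` satisfying Property M with `P(c(G,Z) = 1) > 0`,
`E[Y(1) − Y(0) | c(G,Z) = 1] = E[h(Z)·Y] / E[h(Z)·D]` where
`h(z) = λ'Σ⁻¹(Γ(z) − EΓ)` and `λ_S = E[c(g(S), Z)]`. -/
theorem stmt13 {Ω : Type*} [MeasurableSpace Ω] (μ : Measure Ω) [IsProbabilityMeasure μ]
    {J : ℕ} (Z : Ω → Fin J → Bool) (hZm : Measurable Z)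
    (hfull : ∀ z : Fin J → Bool, 0 < μ {ω | Z ω = z})
    {γ : Type*} [Fintype γ] [MeasurableSpace γ] [MeasurableSingletonClass γ]
    (G : Ω → γ) (hGm : Measurable G)
    (Dg : γ → (Fin J → Bool) → Bool) (hVM : ∀ g, Monotone (Dg g))
    (gS : Finset (Fin J) → γ)
    (hgS : ∀ S z, Dg (gS S) z = decide (∀ j ∈ S, z j = true))
    (Y1 Y0 : Ω → ℝ) (hY1m : Measurable Y1) (hY0m : Measurable Y0)
    (hY1i : Integrable Y1 μ) (hY0i : Integrable Y0 μ)
    (hindep : IndepFun (fun ω => (Y1 ω, Y0 ω, G ω)) Z μ)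
    (c : γ → (Fin J → Bool) → ℝ) (hM : PropM Dg gS c)
    (hC : 0 < μ {ω | c (G ω) (Z ω) = 1}) :
    (μ {ω | c (G ω) (Z ω) = 1}).toReal⁻¹ *
        ∫ ω in {ω | c (G ω) (Z ω) = 1}, (Y1 ω - Y0 ω) ∂μ =
      (∫ ω, hB μ Z (fun S => ∫ ω', c (gS S.1) (Z ω') ∂μ) (Z ω) *
          ((if Dg (G ω) (Z ω) = true then (1 : ℝ) else 0) * Y1 ω +
            (1 - if Dg (G ω) (Z ω) = true then (1 : ℝ) else 0) * Y0 ω) ∂μ) /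
      (∫ ω, hB μ Z (fun S => ∫ ω', c (gS S.1) (Z ω') ∂μ) (Z ω) *
          (if Dg (G ω) (Z ω) = true then (1 : ℝ) else 0) ∂μ) :=
  stmt13_general μ Z hZm hfull G hGm Dg hVM gS Y1 Y0 hY1m hY0m hY1i hY0i hindep c hM
end

section
/- The All Compliers LATE is a Wald ratio: under independence, vector monotonicity, and P(Z = (1,…,1)) > 0 and P(Z = (0,…,0)) > 0, E[Y(1) − Y(0) | G ∉ {always-taker, never-taker}] = (E[Y | Z = 1̄] − E[Y | Z = 0̄]) / (E[D | Z = 1̄] − E[D | Z = 0̄]), provided the denominator is nonzero, where 1̄ = (1,…,1) and 0̄ = (0,…,0). -/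
/-!
Conditioning on `Z = z` and using independence, `Z` may be replaced by the constant `z`: the
conditional means of `Y` and `D` given `Z = z` are the means of the potential outcome
`D_G(z) Y(1) + (1 - D_G(z)) Y(0)` and of `D_G(z)`. Monotonicity makes `D_G(1̄) - D_G(0̄)` the
indicator of the compliers, i.e. of `D_G` being nonconstant, so the Wald numerator is
`E[1_C (Y(1) - Y(0))]` and the denominator is `P(C)`.
-/

open MeasureTheory ProbabilityTheory

theorem Monotone.ne_const_true_and_ne_const_false_iff {α : Type*} [Preorder α] [OrderBot α]
    [OrderTop α] {f : α → Bool} (hf : Monotone f) :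
    (f ≠ fun _ => true) ∧ (f ≠ fun _ => false) ↔ f ⊤ = true ∧ f ⊥ = false := by
  constructor
  · rintro ⟨hne_true, hne_false⟩
    refine ⟨?_, ?_⟩
    · by_contra htop
      exact hne_false <| funext fun a =>
        le_antisymm (by simpa [htop] using hf (le_top (a := a))) (Bool.false_le _)
    · by_contra hbot
      exact hne_true <| funext fun a =>
        le_antisymm (Bool.le_true _) (by simpa [hbot] using hf (bot_le (a := a)))
  · rintro ⟨htop, hbot⟩
    exact ⟨fun h => by simp [h] at hbot, fun h => by simp [h] at htop⟩

theorem Monotone.ite_top_sub_ite_bot {α : Type*} [Preorder α] [OrderBot α] [OrderTop α]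
    {f : α → Bool} (hf : Monotone f) :
    ((if f ⊤ then (1 : ℝ) else 0) - if f ⊥ then 1 else 0) =
      if f ⊤ = true ∧ f ⊥ = false then 1 else 0 := by
  have hle : f ⊥ ≤ f ⊤ := hf bot_le
  revert hle
  cases f ⊤ <;> cases f ⊥ <;> simp

theorem setOf_nonconstant_eq_of_monotone {Ω α : Type*} [Preorder α] [OrderBot α] [OrderTop α]
    {T : Ω → α → Bool} (hmono : ∀ ω, Monotone (T ω)) :
    {ω | (T ω ≠ fun _ => true) ∧ (T ω ≠ fun _ => false)} = {ω | T ω ⊤ = true ∧ T ω ⊥ = false} :=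
  Set.ext fun ω => (hmono ω).ne_const_true_and_ne_const_false_iff

namespace ProbabilityTheory

theorem IndepFun.setIntegral_eq_integral_eval {Ω α β : Type*} [MeasurableSpace Ω]
    {μ : Measure Ω} [IsFiniteMeasure μ] [MeasurableSpace α] [MeasurableSpace β]
    [MeasurableSingletonClass β] {W : Ω → α} {Z : Ω → β} (hindep : IndepFun W Z μ)
    (hW : AEMeasurable W μ) (hZ : Measurable Z) {z : β} (hz : μ {ω | Z ω = z} ≠ 0)
    {φ : α → β → ℝ} (hφ : Measurable fun a => φ a z) :
    (μ {ω | Z ω = z}).toReal⁻¹ * ∫ ω in {ω | Z ω = z}, φ (W ω) (Z ω) ∂μ = ∫ ω, φ (W ω) z ∂μ := by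
  have hzW : ∫ ω in {ω | Z ω = z}, φ (W ω) (Z ω) ∂μ = ∫ ω in {ω | Z ω = z}, φ (W ω) z ∂μ :=
    setIntegral_congr_fun (hZ (measurableSet_singleton z)) fun ω hω => by rw [hω.out]
  rw [hzW, ((IndepFun_iff_Indep Z W μ).1 hindep.symm).setIntegral_eq_mul (A := {ω | Z ω = z})
    hZ.comap_le hW ⟨{z}, measurableSet_singleton z, rfl⟩ hφ.aestronglyMeasurable, measureReal_def,
    ← mul_assoc, inv_mul_cancel₀ (ENNReal.toReal_ne_zero.2 ⟨hz, measure_ne_top μ _⟩), one_mul]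

end ProbabilityTheory

section Compliance

variable {Ω α : Type*} [MeasurableSpace Ω] {μ : Measure Ω} {Y1 Y0 : Ω → ℝ}

theorem measurable_ite_one_zero {D : Ω → Bool} (hD : Measurable D) :
    Measurable fun ω => if D ω then (1 : ℝ) else 0 :=
  (measurable_of_finite fun b : Bool => if b then (1 : ℝ) else 0).comp hD

theorem integrable_ite_one_zero [IsFiniteMeasure μ] {D : Ω → Bool} (hD : Measurable D) :
    Integrable (fun ω => if D ω then (1 : ℝ) else 0) μ :=
  .of_bound (measurable_ite_one_zero hD).aestronglyMeasurable 1
    (ae_of_all _ fun ω => by split_ifs <;> simp)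

theorem integrable_ite_mul_add_one_sub_ite_mul {D : Ω → Bool} (hD : Measurable D)
    (hY1 : Integrable Y1 μ) (hY0 : Integrable Y0 μ) :
    Integrable (fun ω => (if D ω then (1 : ℝ) else 0) * Y1 ω +
      (1 - if D ω then (1 : ℝ) else 0) * Y0 ω) μ := by
  have hd := measurable_ite_one_zero hD
  exact (hY1.bdd_mul hd.aestronglyMeasurable (c := 1)
      (ae_of_all _ fun ω => by split_ifs <;> simp)).add
    (hY0.bdd_mul (measurable_const.sub hd).aestronglyMeasurable (c := 1)
      (ae_of_all _ fun ω => by split_ifs <;> simp))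

variable [Preorder α] [OrderBot α] [OrderTop α] {T : Ω → α → Bool}

theorem measurableSet_nonconstant_of_monotone (hmono : ∀ ω, Monotone (T ω))
    (hT : ∀ a, Measurable fun ω => T ω a) :
    MeasurableSet {ω | (T ω ≠ fun _ => true) ∧ (T ω ≠ fun _ => false)} := by
  rw [setOf_nonconstant_eq_of_monotone hmono, Set.ofPred_and]
  exact (hT ⊤ (measurableSet_singleton true)).inter (hT ⊥ (measurableSet_singleton false))

theorem integral_ite_top_sub_integral_ite_bot [IsFiniteMeasure μ] (hmono : ∀ ω, Monotone (T ω))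
    (hT : ∀ a, Measurable fun ω => T ω a) :
    ∫ ω, (if T ω ⊤ then (1 : ℝ) else 0) ∂μ - ∫ ω, (if T ω ⊥ then (1 : ℝ) else 0) ∂μ =
      (μ {ω | (T ω ≠ fun _ => true) ∧ (T ω ≠ fun _ => false)}).toReal := by
  rw [← integral_sub (integrable_ite_one_zero (hT ⊤)) (integrable_ite_one_zero (hT ⊥)),
    ← measureReal_def, ← integral_indicator_one (measurableSet_nonconstant_of_monotone hmono hT),
    setOf_nonconstant_eq_of_monotone hmono]
  congr 1 with ω
  rw [(hmono ω).ite_top_sub_ite_bot, Set.indicator_apply]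
  simp

theorem integral_observed_top_sub_integral_observed_bot (hmono : ∀ ω, Monotone (T ω))
    (hT : ∀ a, Measurable fun ω => T ω a) (hY1 : Integrable Y1 μ) (hY0 : Integrable Y0 μ) :
    ∫ ω, ((if T ω ⊤ then (1 : ℝ) else 0) * Y1 ω + (1 - if T ω ⊤ then (1 : ℝ) else 0) * Y0 ω) ∂μ -
        ∫ ω, ((if T ω ⊥ then (1 : ℝ) else 0) * Y1 ω +
          (1 - if T ω ⊥ then (1 : ℝ) else 0) * Y0 ω) ∂μ =
      ∫ ω in {ω | (T ω ≠ fun _ => true) ∧ (T ω ≠ fun _ => false)}, (Y1 ω - Y0 ω) ∂μ := by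
  rw [← integral_sub (integrable_ite_mul_add_one_sub_ite_mul (hT ⊤) hY1 hY0)
    (integrable_ite_mul_add_one_sub_ite_mul (hT ⊥) hY1 hY0),
    ← integral_indicator (measurableSet_nonconstant_of_monotone hmono hT),
    setOf_nonconstant_eq_of_monotone hmono]
  congr 1 with ω
  have hfactor : ∀ d1 d0 y1 y0 : ℝ,
      d1 * y1 + (1 - d1) * y0 - (d0 * y1 + (1 - d0) * y0) = (d1 - d0) * (y1 - y0) :=
    fun _ _ _ _ => by ring
  rw [Set.indicator_apply, hfactor, (hmono ω).ite_top_sub_ite_bot]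
  simp

end Compliance

theorem stmt15_general {Ω : Type*} [MeasurableSpace Ω] (μ : Measure Ω) [IsProbabilityMeasure μ]
    {J : ℕ} (Z : Ω → Fin J → Bool) (hZm : Measurable Z)
    {γ : Type*} [Fintype γ] [MeasurableSpace γ] [MeasurableSingletonClass γ]
    (G : Ω → γ) (hGm : Measurable G)
    (Dg : γ → (Fin J → Bool) → Bool) (hVM : ∀ g, Monotone (Dg g))
    (Y1 Y0 : Ω → ℝ) (hY1m : Measurable Y1) (hY0m : Measurable Y0)
    (hY1i : Integrable Y1 μ) (hY0i : Integrable Y0 μ)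
    (hindep : IndepFun (fun ω => (Y1 ω, Y0 ω, G ω)) Z μ)
    (h1 : 0 < μ {ω | Z ω = fun _ => true})
    (h0 : 0 < μ {ω | Z ω = fun _ => false}) :
    (μ {ω | Dg (G ω) ≠ (fun _ => true) ∧ Dg (G ω) ≠ (fun _ => false)}).toReal⁻¹ *
        ∫ ω in {ω | Dg (G ω) ≠ (fun _ => true) ∧ Dg (G ω) ≠ (fun _ => false)},
          (Y1 ω - Y0 ω) ∂μ =
      (((μ {ω | Z ω = fun _ => true}).toReal⁻¹ *
          ∫ ω in {ω | Z ω = fun _ => true},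
            ((if Dg (G ω) (Z ω) = true then (1 : ℝ) else 0) * Y1 ω +
              (1 - if Dg (G ω) (Z ω) = true then (1 : ℝ) else 0) * Y0 ω) ∂μ) -
        ((μ {ω | Z ω = fun _ => false}).toReal⁻¹ *
          ∫ ω in {ω | Z ω = fun _ => false},
            ((if Dg (G ω) (Z ω) = true then (1 : ℝ) else 0) * Y1 ω +
              (1 - if Dg (G ω) (Z ω) = true then (1 : ℝ) else 0) * Y0 ω) ∂μ)) /
      (((μ {ω | Z ω = fun _ => true}).toReal⁻¹ *
          ∫ ω in {ω | Z ω = fun _ => true},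
            (if Dg (G ω) (Z ω) = true then (1 : ℝ) else 0) ∂μ) -
        ((μ {ω | Z ω = fun _ => false}).toReal⁻¹ *
          ∫ ω in {ω | Z ω = fun _ => false},
            (if Dg (G ω) (Z ω) = true then (1 : ℝ) else 0) ∂μ)) := by
  have hW : Measurable fun ω => (Y1 ω, Y0 ω, G ω) := hY1m.prodMk (hY0m.prodMk hGm)
  have hT : ∀ z, Measurable fun ω => Dg (G ω) z :=
    fun z => (measurable_of_finite fun g => Dg g z).comp hGm
  have hd : ∀ z, Measurable fun p : ℝ × ℝ × γ => if Dg p.2.2 z then (1 : ℝ) else 0 :=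
    fun z => (measurable_of_finite fun g => if Dg g z then (1 : ℝ) else 0).comp (by fun_prop)
  have hcondY := fun z (hz : μ {ω | Z ω = z} ≠ 0) =>
    hindep.setIntegral_eq_integral_eval hW.aemeasurable hZm hz
      (φ := fun p z => (if Dg p.2.2 z then (1 : ℝ) else 0) * p.1 +
        (1 - if Dg p.2.2 z then (1 : ℝ) else 0) * p.2.1) (by fun_prop)
  have hcondD := fun z (hz : μ {ω | Z ω = z} ≠ 0) =>
    hindep.setIntegral_eq_integral_eval hW.aemeasurable hZm hz
      (φ := fun p z => if Dg p.2.2 z then (1 : ℝ) else 0) (hd z)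
  rw [hcondY _ h1.ne', hcondY _ h0.ne', hcondD _ h1.ne', hcondD _ h0.ne', inv_mul_eq_div]
  congr 1
  · exact (integral_observed_top_sub_integral_observed_bot (fun ω => hVM (G ω)) hT hY1i hY0i).symm
  · exact (integral_ite_top_sub_integral_ite_bot (fun ω => hVM (G ω)) hT).symm

/-- The All Compliers LATE equals a single Wald ratio: under independence, vector
monotonicity (each `D_g` monotone, always-takers `D_g ≡ 1`, never-takers `D_g ≡ 0`),
and positive probability on `Z = (1,…,1)` and `Z = (0,…,0)`,
`E[Y(1)−Y(0) | G ∉ {a.t., n.t.}] = (E[Y|Z=1̄] − E[Y|Z=0̄]) / (E[D|Z=1̄] − E[D|Z=0̄])`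
provided the denominator is nonzero. -/
theorem stmt15 {Ω : Type*} [MeasurableSpace Ω] (μ : Measure Ω) [IsProbabilityMeasure μ]
    {J : ℕ} (Z : Ω → Fin J → Bool) (hZm : Measurable Z)
    {γ : Type*} [Fintype γ] [MeasurableSpace γ] [MeasurableSingletonClass γ]
    (G : Ω → γ) (hGm : Measurable G)
    (Dg : γ → (Fin J → Bool) → Bool) (hVM : ∀ g, Monotone (Dg g))
    (Y1 Y0 : Ω → ℝ) (hY1m : Measurable Y1) (hY0m : Measurable Y0)
    (hY1i : Integrable Y1 μ) (hY0i : Integrable Y0 μ)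
    (hindep : IndepFun (fun ω => (Y1 ω, Y0 ω, G ω)) Z μ)
    (h1 : 0 < μ {ω | Z ω = fun _ => true})
    (h0 : 0 < μ {ω | Z ω = fun _ => false})
    (hcomp : 0 < μ {ω | Dg (G ω) ≠ (fun _ => true) ∧ Dg (G ω) ≠ (fun _ => false)})
    (hden :
      ((μ {ω | Z ω = fun _ => true}).toReal⁻¹ *
          ∫ ω in {ω | Z ω = fun _ => true},
            (if Dg (G ω) (Z ω) = true then (1 : ℝ) else 0) ∂μ) -
        ((μ {ω | Z ω = fun _ => false}).toReal⁻¹ *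
          ∫ ω in {ω | Z ω = fun _ => false},
            (if Dg (G ω) (Z ω) = true then (1 : ℝ) else 0) ∂μ) ≠ 0) :
    (μ {ω | Dg (G ω) ≠ (fun _ => true) ∧ Dg (G ω) ≠ (fun _ => false)}).toReal⁻¹ *
        ∫ ω in {ω | Dg (G ω) ≠ (fun _ => true) ∧ Dg (G ω) ≠ (fun _ => false)},
          (Y1 ω - Y0 ω) ∂μ =
      (((μ {ω | Z ω = fun _ => true}).toReal⁻¹ *
          ∫ ω in {ω | Z ω = fun _ => true},
            ((if Dg (G ω) (Z ω) = true then (1 : ℝ) else 0) * Y1 ω +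
              (1 - if Dg (G ω) (Z ω) = true then (1 : ℝ) else 0) * Y0 ω) ∂μ) -
        ((μ {ω | Z ω = fun _ => false}).toReal⁻¹ *
          ∫ ω in {ω | Z ω = fun _ => false},
            ((if Dg (G ω) (Z ω) = true then (1 : ℝ) else 0) * Y1 ω +
              (1 - if Dg (G ω) (Z ω) = true then (1 : ℝ) else 0) * Y0 ω) ∂μ)) /
      (((μ {ω | Z ω = fun _ => true}).toReal⁻¹ *
          ∫ ω in {ω | Z ω = fun _ => true},
            (if Dg (G ω) (Z ω) = true then (1 : ℝ) else 0) ∂μ) -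
        ((μ {ω | Z ω = fun _ => false}).toReal⁻¹ *
          ∫ ω in {ω | Z ω = fun _ => false},
            (if Dg (G ω) (Z ω) = true then (1 : ℝ) else 0) ∂μ)) :=
  stmt15_general μ Z hZm G hGm Dg hVM Y1 Y0 hY1m hY0m hY1i hY0i hindep h1 h0
end

section
/- Union-closure lemma: if c : G × Z → {0,1} satisfies Property M, then for each fixed z, the family c^{−1}(z) = {S ⊆ {1,…,J} : S ≠ ∅, c(g(S), z) = 1} is closed under unions, and its complement within the nonempty subsets is also closed under unions. In particular, for nonested nonempty sets A, B: c(g({A,B}), z) = c(g(A), z) + c(g(B), z) − c(g(A∪B), z). -/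
lemma sperner_pair {J : ℕ} (A B : Finset (Fin J)) (hAB : ¬A ⊆ B) (hBA : ¬B ⊆ A) :
    spernerOf (fun z' => decide (∀ j ∈ A, z' j = true) || decide (∀ j ∈ B, z' j = true))
      = {A, B} := by
  have hne : A ≠ B := fun h => hAB (h ▸ subset_rfl)
  ext S
  simp only [spernerOf, chi, Finset.mem_filter, Finset.mem_univ, true_and,
    Bool.or_eq_true, decide_eq_true_eq, Bool.or_eq_false_iff, decide_eq_false_iff_not,
    Finset.mem_insert, Finset.mem_singleton]
  constructor
  · rintro ⟨h1, h2⟩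
    rcases h1 with h | h
    · left
      by_contra hSA
      have := h2 A h (fun hc => hSA hc.symm)
      exact this.1 (fun j hj => hj) |>.elim
    · right
      by_contra hSB
      have := h2 B h (fun hc => hSB hc.symm)
      exact this.2 (fun j hj => hj) |>.elim
  · rintro (rfl | rfl)
    · refine ⟨Or.inl (fun j hj => hj), fun T hT hTne => ?_⟩
      constructor
      · intro hc
        exact hTne (Finset.Subset.antisymm hT (fun j hj => hc j hj))
      · intro hc
        exact hBA (fun j hj => hT (hc j hj))
    · refine ⟨Or.inr (fun j hj => hj), fun T hT hTne => ?_⟩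
      constructor
      · intro hc
        exact hAB (fun j hj => hT (hc j hj))
      · intro hc
        exact hTne (Finset.Subset.antisymm hT (fun j hj => hc j hj))


lemma pow_filter {J : ℕ} (A B : Finset (Fin J)) (hne : A ≠ B) :
    (({A, B} : Finset (Finset (Fin J))).powerset).filter Finset.Nonempty
      = {{A}, {B}, {A, B}} := by
  ext f
  simp only [Finset.mem_filter, Finset.mem_powerset, Finset.mem_insert, Finset.mem_singleton]
  constructor
  · rintro ⟨hsub, hne'⟩
    by_cases hA : A ∈ f <;> by_cases hB : B ∈ f
    · right; right
      apply Finset.Subset.antisymm hsub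
      intro x hx
      rcases Finset.mem_insert.1 hx with rfl | hx
      · exact hA
      · exact (Finset.mem_singleton.1 hx) ▸ hB
    · left
      apply Finset.Subset.antisymm
      · intro x hx
        rcases Finset.mem_insert.1 (hsub hx) with rfl | hx'
        · exact Finset.mem_singleton_self _
        · exact absurd ((Finset.mem_singleton.1 hx') ▸ hx) hB
      · simpa using hA
    · right; left
      apply Finset.Subset.antisymm
      · intro x hx
        rcases Finset.mem_insert.1 (hsub hx) with rfl | hx'
        · exact absurd hx hA
        · exact hx'
      · simpa using hB
    · obtain ⟨x, hx⟩ := hne'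
      rcases Finset.mem_insert.1 (hsub hx) with rfl | hx'
      · exact absurd hx hA
      · exact absurd ((Finset.mem_singleton.1 hx') ▸ hx) hB
  · rintro (rfl | rfl | rfl)
    · exact ⟨by intro x hx; simp_all, ⟨A, by simp⟩⟩
    · exact ⟨by intro x hx; simp_all, ⟨B, by simp⟩⟩
    · exact ⟨subset_rfl, ⟨A, by simp⟩⟩

lemma sum_Mcoef_pair {J : ℕ} (A B : Finset (Fin J)) (hA : A.Nonempty) (hB : B.Nonempty)
    (hne : A ≠ B) (w : Finset (Fin J) → ℝ) :
    ∑ S' ∈ Finset.univ.filter (fun S' : Finset (Fin J) => S'.Nonempty),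
      Mcoef {A, B} S' * w S' = w A + w B - w (A ∪ B) := by
  unfold Mcoef
  have step1 : ∀ S' ∈ Finset.univ.filter (fun S' : Finset (Fin J) => S'.Nonempty),
      (∑ f ∈ ({A, B} : Finset (Finset (Fin J))).powerset.filter
        (fun f => f.Nonempty ∧ f.sup id = S'), (-1 : ℝ) ^ (f.card + 1)) * w S'
      = ∑ f ∈ (({A, B} : Finset (Finset (Fin J))).powerset.filter Finset.Nonempty).filter
          (fun f => f.sup id = S'), (-1 : ℝ) ^ (f.card + 1) * w (f.sup id) := by
    intro S' _
    rw [Finset.sum_mul, Finset.filter_filter]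
    apply Finset.sum_congr rfl
    intro f hf
    rw [(Finset.mem_filter.1 hf).2.2]
  rw [Finset.sum_congr rfl step1]
  rw [Finset.sum_fiberwise_of_maps_to
      (g := fun f : Finset (Finset (Fin J)) => f.sup id)
      (s := (({A, B} : Finset (Finset (Fin J))).powerset).filter Finset.Nonempty)
      (t := Finset.univ.filter (fun S' : Finset (Fin J) => S'.Nonempty))
      ?_ (fun f => (-1 : ℝ) ^ (f.card + 1) * w (f.sup id))]
  · rw [pow_filter A B hne]
    have h1 : ({A} : Finset (Finset (Fin J))) ≠ {B} := by simpa using hne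
    have h2 : ({A} : Finset (Finset (Fin J))) ≠ {A, B} := by
      intro h
      have : B ∈ ({A} : Finset (Finset (Fin J))) := h ▸ (by simp)
      exact hne (Finset.mem_singleton.1 this).symm
    have h3 : ({B} : Finset (Finset (Fin J))) ≠ {A, B} := by
      intro h
      have : A ∈ ({B} : Finset (Finset (Fin J))) := h ▸ (by simp)
      exact hne (Finset.mem_singleton.1 this)
    rw [Finset.sum_insert (by simp [h1, h2]), Finset.sum_insert (by simp [h3]),
      Finset.sum_singleton]
    have sA : ({A} : Finset (Finset (Fin J))).sup id = A := by simp
    have sB : ({B} : Finset (Finset (Fin J))).sup id = B := by simp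
    have sAB : ({A, B} : Finset (Finset (Fin J))).sup id = A ∪ B := by
      simp [Finset.sup_insert, Finset.sup_union]
    have cAB : ({A, B} : Finset (Finset (Fin J))).card = 2 := by
      rw [Finset.card_insert_of_notMem (by simpa using hne), Finset.card_singleton]
    rw [sA, sB, sAB, cAB, Finset.card_singleton, Finset.card_singleton]
    ring
  · intro f hf
    simp only [Finset.mem_filter, Finset.mem_univ, true_and]
    obtain ⟨hsub, x, hx⟩ := Finset.mem_filter.1 hf
    have hxne : x.Nonempty := by
      rcases Finset.mem_insert.1 ((Finset.mem_powerset.1 hsub) hx) with rfl | h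
      · exact hA
      · exact (Finset.mem_singleton.1 h) ▸ hB
    obtain ⟨y, hy⟩ := hxne
    exact ⟨y, Finset.mem_sup.2 ⟨x, hx, hy⟩⟩

/-- Union-closure lemma: under Property M (with all compliance groups represented),
for each fixed `z` the family `{S ≠ ∅ : c(g(S), z) = 1}` is closed under unions and
its complement among nonempty subsets is closed under unions; moreover for nonested
nonempty `A, B`: `c(g({A,B}), z) = c(g(A), z) + c(g(B), z) − c(g(A∪B), z)`. -/
theorem stmt17 {J : ℕ} {γ : Type*} (Dg : γ → (Fin J → Bool) → Bool)
    (gS : Finset (Fin J) → γ)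
    (hgS : ∀ S z, Dg (gS S) z = decide (∀ j ∈ S, z j = true))
    (hsurj : ∀ f : (Fin J → Bool) → Bool, Monotone f → ∃ g : γ, Dg g = f)
    (c : γ → (Fin J → Bool) → ℝ) (hM : PropM Dg gS c) :
    (∀ (z : Fin J → Bool) (A B : Finset (Fin J)), A.Nonempty → B.Nonempty →
      c (gS A) z = 1 → c (gS B) z = 1 → c (gS (A ∪ B)) z = 1) ∧
    (∀ (z : Fin J → Bool) (A B : Finset (Fin J)), A.Nonempty → B.Nonempty →
      c (gS A) z = 0 → c (gS B) z = 0 → c (gS (A ∪ B)) z = 0) ∧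
    (∀ (z : Fin J → Bool) (A B : Finset (Fin J)), A.Nonempty → B.Nonempty →
      ¬A ⊆ B → ¬B ⊆ A → ∀ gF : γ,
      Dg gF = (fun z' => decide (∀ j ∈ A, z' j = true) ||
        decide (∀ j ∈ B, z' j = true)) →
      c gF z = c (gS A) z + c (gS B) z - c (gS (A ∪ B)) z) := by
  obtain ⟨h01, htrue, hfalse, hmain⟩ := hM
  -- Part 3
  have part3 : ∀ (z : Fin J → Bool) (A B : Finset (Fin J)), A.Nonempty → B.Nonempty →
      ¬A ⊆ B → ¬B ⊆ A → ∀ gF : γ,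
      Dg gF = (fun z' => decide (∀ j ∈ A, z' j = true) ||
        decide (∀ j ∈ B, z' j = true)) →
      c gF z = c (gS A) z + c (gS B) z - c (gS (A ∪ B)) z := by
    intro z A B hA hB hAB hBA gF hgF
    have hne : A ≠ B := fun h => hAB (h ▸ subset_rfl)
    obtain ⟨a, ha⟩ := hA
    have hnt : Dg gF ≠ (fun _ => true) := by
      intro h
      have h1 := congrFun h (fun _ => false)
      rw [hgF] at h1
      simp at h1
      rcases h1 with h1 | h1
      · exact h1 a ha
      · obtain ⟨b, hb⟩ := hB; exact h1 b hb
    have hnf : Dg gF ≠ (fun _ => false) := by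
      intro h
      have h1 := congrFun h (fun _ => true)
      rw [hgF] at h1
      simp at h1
    have := hmain gF hnt hnf z
    rw [hgF, sperner_pair A B hAB hBA,
      sum_Mcoef_pair A B ⟨a, ha⟩ hB hne (fun S' => c (gS S') z)] at this
    exact this
  refine ⟨?_, ?_, part3⟩
  all_goals {
    intro z A B hA hB hcA hcB
    by_cases hAB : A ⊆ B
    · rw [Finset.union_eq_right.2 hAB]; exact hcB
    by_cases hBA : B ⊆ A
    · rw [Finset.union_eq_left.2 hBA]; exact hcA
    have hmono : Monotone (fun z' : Fin J → Bool => decide (∀ j ∈ A, z' j = true) ||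
        decide (∀ j ∈ B, z' j = true)) := by
      intro x y hxy
      rw [Bool.le_iff_imp]
      simp only [Bool.or_eq_true, decide_eq_true_eq]
      rintro (h | h)
      · exact Or.inl fun j hj => Bool.le_iff_imp.1 (hxy j) (h j hj)
      · exact Or.inr fun j hj => Bool.le_iff_imp.1 (hxy j) (h j hj)
    obtain ⟨gF, hgF⟩ := hsurj _ hmono
    have h3 := part3 z A B hA hB hAB hBA gF hgF
    rcases h01 gF z with h | h <;> rcases h01 (gS (A ∪ B)) z with h' | h' <;>
      rw [hcA, hcB, h'] at h3 <;> rw [h'] <;> linarith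
  }
end

section
/- Representation of Property M weights (if direction): if c(g, z) = ∑_{k=1}^K (D_g(u_k(z)) − D_g(l_k(z))) for functions u_k, l_k : Z → Z satisfying u_k(z) ≥ l_k(z) ≥ u_{k+1}(z) componentwise for all z and k, then c satisfies Property M and takes values in {0,1} for every g corresponding to a monotone boolean selection function D_g. -/
lemma mono_true {J : ℕ} {D : (Fin J → Bool) → Bool} (hD : Monotone D)
    {x y : Fin J → Bool} (h : x ≤ y) (hx : D x = true) : D y = true := by
  have h2 := hD h
  rw [hx] at h2
  cases hy : D y
  · rw [hy] at h2; exact absurd h2 (by decide)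
  · rfl

lemma chi_le {J : ℕ} {S : Finset (Fin J)} {z : Fin J → Bool}
    (h : ∀ j ∈ S, z j = true) : chi S ≤ z := by
  intro j
  by_cases hj : j ∈ S
  · simp [chi, hj, h j hj]
  · simp [chi, hj]

lemma exists_sperner {J : ℕ} (D : (Fin J → Bool) → Bool) :
    ∀ S₀ : Finset (Fin J), D (chi S₀) = true → ∃ S ∈ spernerOf D, S ⊆ S₀ := by
  intro S₀
  induction S₀ using Finset.strongInduction with
  | _ S₀ ih =>
    intro hD
    by_cases h : ∀ T ⊆ S₀, T ≠ S₀ → D (chi T) = false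
    · refine ⟨S₀, ?_, subset_rfl⟩
      simp only [spernerOf, Finset.mem_filter, Finset.mem_univ, true_and]
      exact ⟨hD, h⟩
    · push_neg at h
      obtain ⟨T, hTsub, hTne, hT⟩ := h
      obtain ⟨S, hS, hSsub⟩ := ih T (ssubset_of_subset_of_ne hTsub hTne)
        (by simpa using hT)
      exact ⟨S, hS, hSsub.trans hTsub⟩

lemma keyIE {J : ℕ} (D : (Fin J → Bool) → Bool) (hD : Monotone D)
    (hne : D ≠ fun _ => true) (z : Fin J → Bool) :
    (if D z = true then (1:ℝ) else 0) =
      ∑ S' ∈ Finset.univ.filter (fun S' : Finset (Fin J) => S'.Nonempty),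
        Mcoef (spernerOf D) S' * (if (∀ j ∈ S', z j = true) then (1:ℝ) else 0) := by
  classical
  set F := spernerOf D with hF
  set F₁ := F.filter (fun S => ∀ j ∈ S, z j = true) with hF₁
  have hfalse : D (chi (∅ : Finset (Fin J))) = false := by
    cases h : D (chi (∅ : Finset (Fin J)))
    · rfl
    · exfalso
      apply hne
      funext w
      exact mono_true hD (by intro j; simp [chi]) h
  have hnonemptyS : ∀ S ∈ F, S.Nonempty := by
    intro S hS
    rcases S.eq_empty_or_nonempty with h | h
    · exfalso
      rw [hF, spernerOf, Finset.mem_filter] at hS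
      rw [h] at hS
      rw [hS.2.1] at hfalse
      exact absurd hfalse (by decide)
    · exact h
  -- cover
  have hcover : D z = true ↔ F₁.Nonempty := by
    constructor
    · intro h
      have hchi : chi (Finset.univ.filter (fun j => z j = true)) = z := by
        funext j; simp [chi]
      obtain ⟨S, hS, hsub⟩ := exists_sperner D _ (by rw [hchi]; exact h)
      refine ⟨S, ?_⟩
      rw [hF₁, Finset.mem_filter]
      exact ⟨hS, fun j hj => by simpa using (Finset.mem_filter.mp (hsub hj)).2⟩
    · rintro ⟨S, hS⟩
      rw [hF₁, Finset.mem_filter] at hS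
      rw [hF, spernerOf, Finset.mem_filter] at hS
      exact mono_true hD (chi_le hS.2) hS.1.2.1
  -- RHS rewrite
  have hfib : ∀ f ∈ F.powerset.filter (fun f => f.Nonempty),
      f.sup id ∈ Finset.univ.filter (fun S' : Finset (Fin J) => S'.Nonempty) := by
    intro f hf
    simp only [Finset.mem_filter, Finset.mem_powerset, Finset.mem_univ, true_and] at hf ⊢
    obtain ⟨S, hS⟩ := hf.2
    exact (hnonemptyS S (hf.1 hS)).mono (Finset.le_sup (f := id) hS)
  have step1 : ∑ S' ∈ Finset.univ.filter (fun S' : Finset (Fin J) => S'.Nonempty),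
        Mcoef F S' * (if (∀ j ∈ S', z j = true) then (1:ℝ) else 0)
      = ∑ f ∈ F.powerset.filter (fun f => f.Nonempty),
          (-1:ℝ) ^ (f.card + 1) * (if (∀ j ∈ f.sup id, z j = true) then (1:ℝ) else 0) := by
    rw [← Finset.sum_fiberwise_of_maps_to hfib]
    apply Finset.sum_congr rfl
    intro S' _
    rw [Mcoef, Finset.sum_mul, Finset.filter_filter]
    apply Finset.sum_congr rfl
    intro f hf
    have : f.sup id = S' := (Finset.mem_filter.mp hf).2.2
    rw [this]
  have step2 : ∀ f ∈ F.powerset.filter (fun f => f.Nonempty),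
      (if (∀ j ∈ f.sup id, z j = true) then (1:ℝ) else 0)
        = (if f ⊆ F₁ then (1:ℝ) else 0) := by
    intro f hf
    simp only [Finset.mem_filter, Finset.mem_powerset] at hf
    congr 1
    simp only [eq_iff_iff]
    constructor
    · intro h S hS
      rw [hF₁, Finset.mem_filter]
      exact ⟨hf.1 hS, fun j hj => h j (Finset.mem_sup.mpr ⟨S, hS, hj⟩)⟩
    · intro h j hj
      obtain ⟨S, hS, hjS⟩ := Finset.mem_sup.mp hj
      exact (Finset.mem_filter.mp (h hS)).2 j hjS
  have step3 : (F.powerset.filter (fun f => f.Nonempty)).filter (fun f => f ⊆ F₁)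
      = F₁.powerset.filter (fun f => f.Nonempty) := by
    ext f
    simp only [Finset.filter_filter, Finset.mem_filter, Finset.mem_powerset]
    have hsub : F₁ ⊆ F := Finset.filter_subset _ _
    constructor
    · rintro ⟨h1, h2, h3⟩; exact ⟨h3, h2⟩
    · rintro ⟨h1, h2⟩; exact ⟨h1.trans hsub, h2, h1⟩
  have hpow : ∑ f ∈ F₁.powerset, (-1:ℝ) ^ f.card = if F₁ = ∅ then 1 else 0 := by
    have h := Finset.sum_powerset_neg_one_pow_card (x := F₁)
    calc ∑ f ∈ F₁.powerset, (-1:ℝ) ^ f.card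
        = ((∑ f ∈ F₁.powerset, (-1:ℤ) ^ f.card : ℤ) : ℝ) := by push_cast; rfl
      _ = _ := by rw [h]; split <;> norm_num
  have stepE : ∑ f ∈ F₁.powerset.filter (fun f => f.Nonempty), (-1:ℝ) ^ (f.card + 1)
      = if F₁.Nonempty then 1 else 0 := by
    have hemp : (∅ : Finset (Finset (Fin J))) ∈ F₁.powerset := by simp
    have heq : F₁.powerset.filter (fun f => f.Nonempty) = F₁.powerset.erase ∅ := by
      ext f
      simp [Finset.nonempty_iff_ne_empty, and_comm]
    rw [heq, Finset.sum_erase_eq_sub hemp]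
    have : ∑ f ∈ F₁.powerset, (-1:ℝ) ^ (f.card + 1)
        = -∑ f ∈ F₁.powerset, (-1:ℝ) ^ f.card := by
      rw [← Finset.sum_neg_distrib]
      apply Finset.sum_congr rfl
      intro f _
      ring
    rw [this, hpow]
    rcases F₁.eq_empty_or_nonempty with h | h
    · simp [h]
    · rw [if_neg (Finset.nonempty_iff_ne_empty.mp h), if_pos h]
      norm_num
  have step4 : ∑ f ∈ F.powerset.filter (fun f => f.Nonempty),
      (-1:ℝ) ^ (f.card + 1) * (if (∀ j ∈ f.sup id, z j = true) then (1:ℝ) else 0)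
      = ∑ f ∈ F₁.powerset.filter (fun f => f.Nonempty), (-1:ℝ) ^ (f.card + 1) := by
    rw [← step3]
    conv_rhs => rw [Finset.sum_filter]
    apply Finset.sum_congr rfl
    intro f hf
    rw [step2 f hf]
    split <;> simp
  rw [step1, step4, stepE]
  by_cases h : D z = true
  · rw [if_pos h, if_pos (hcover.mp h)]
  · rw [if_neg h, if_neg (fun hh => h (hcover.mpr hh))]

/-- Proposition 6 (if direction): if
`c(g, z) = ∑_{k} (D_g(u_k(z)) − D_g(l_k(z)))` for functions `u_k, l_k : Z → Z` with
`u_k(z) ≥ l_k(z) ≥ u_{k+1}(z)` componentwise, then `c` satisfies Property M (in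
particular it is `{0,1}`-valued) whenever every selection function `D_g` is monotone. -/
theorem stmt18 {J K : ℕ} {γ : Type*} (Dg : γ → (Fin J → Bool) → Bool)
    (hVM : ∀ g, Monotone (Dg g))
    (gS : Finset (Fin J) → γ)
    (hgS : ∀ S z, Dg (gS S) z = decide (∀ j ∈ S, z j = true))
    (u l : Fin K → (Fin J → Bool) → (Fin J → Bool))
    (hul : ∀ (k : Fin K) (z : Fin J → Bool), l k z ≤ u k z)
    (hlu : ∀ (k : Fin K) (h : (k : ℕ) + 1 < K) (z : Fin J → Bool),
      u ⟨(k : ℕ) + 1, h⟩ z ≤ l k z) :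
    PropM Dg gS (fun g z => ∑ k : Fin K,
      ((if Dg g (u k z) = true then (1 : ℝ) else 0) -
        (if Dg g (l k z) = true then (1 : ℝ) else 0))) := by

  classical
  have hchainN : ∀ (n : ℕ) (hn : n < K) (z : Fin J → Bool) (k : Fin K),
      (k : ℕ) < n → u ⟨n, hn⟩ z ≤ l k z := by
    intro n
    induction n with
    | zero => intro hn z k hk; omega
    | succ m ih =>
      intro hn z k hk
      have hm : m < K := by omega
      have h1 : u ⟨m + 1, hn⟩ z ≤ l ⟨m, hm⟩ z := hlu ⟨m, hm⟩ hn z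
      rcases Nat.lt_or_ge (k : ℕ) m with h | h
      · exact h1.trans ((hul ⟨m, hm⟩ z).trans (ih hm z k h))
      · have hkm : (k : ℕ) = m := by omega
        rw [show k = ⟨m, hm⟩ from Fin.ext hkm]; exact h1
  have hchain : ∀ (z : Fin J → Bool) (k k' : Fin K), k < k' → u k' z ≤ l k z := by
    intro z k k' hk
    have := hchainN (k' : ℕ) k'.isLt z k hk
    simpa using this
  refine ⟨?_, ?_, ?_, ?_⟩
  · -- {0,1}-valued
    intro g z
    beta_reduce
    by_cases hex : ∃ k, Dg g (u k z) = true ∧ Dg g (l k z) = false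
    · right
      obtain ⟨k₀, hk₀u, hk₀l⟩ := hex
      rw [Finset.sum_eq_single k₀]
      · rw [hk₀u, hk₀l]; norm_num
      · intro k _ hk
        rcases lt_or_gt_of_ne hk with h | h
        · have h1 : Dg g (l k z) = true :=
            mono_true (hVM g) (hchain z k k₀ h) hk₀u
          have h2 : Dg g (u k z) = true :=
            mono_true (hVM g) (hul k z) h1
          rw [h1, h2]; norm_num
        · have h1 : Dg g (u k z) = false := by
            cases hc : Dg g (u k z)
            · rfl
            · rw [mono_true (hVM g) (hchain z k₀ k h) hc] at hk₀l
              exact absurd hk₀l (by decide)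
          have h2 : Dg g (l k z) = false := by
            cases hc : Dg g (l k z)
            · rfl
            · rw [mono_true (hVM g) (hul k z) hc] at h1
              exact absurd h1 (by decide)
          rw [h1, h2]; norm_num
      · intro h; exact absurd (Finset.mem_univ k₀) h
    · left
      push_neg at hex
      apply Finset.sum_eq_zero
      intro k _
      cases hu : Dg g (u k z)
      · have hl : Dg g (l k z) = false := by
          cases hc : Dg g (l k z)
          · rfl
          · rw [mono_true (hVM g) (hul k z) hc] at hu
            exact absurd hu (by decide)
        rw [hl]; norm_num
      · have hl : Dg g (l k z) = true := by
          cases hc : Dg g (l k z)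
          · exact absurd hc (hex k hu)
          · rfl
        rw [hl]; norm_num
  · intro g hg z
    apply Finset.sum_eq_zero
    intro k _
    rw [hg]; norm_num
  · intro g hg z
    apply Finset.sum_eq_zero
    intro k _
    rw [hg]; norm_num
  · intro g hgt _ z
    have hrw := keyIE (Dg g) (hVM g) hgt
    calc ∑ k : Fin K, ((if Dg g (u k z) = true then (1:ℝ) else 0) -
          (if Dg g (l k z) = true then (1:ℝ) else 0))
        = ∑ k : Fin K, ∑ S' ∈ Finset.univ.filter (fun S' : Finset (Fin J) => S'.Nonempty),
            Mcoef (spernerOf (Dg g)) S' *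
              ((if (∀ j ∈ S', u k z j = true) then (1:ℝ) else 0) -
                (if (∀ j ∈ S', l k z j = true) then (1:ℝ) else 0)) := by
          apply Finset.sum_congr rfl
          intro k _
          rw [hrw (u k z), hrw (l k z), ← Finset.sum_sub_distrib]
          apply Finset.sum_congr rfl
          intro S' _
          ring
      _ = ∑ S' ∈ Finset.univ.filter (fun S' : Finset (Fin J) => S'.Nonempty),
            Mcoef (spernerOf (Dg g)) S' * ∑ k : Fin K,
              ((if (∀ j ∈ S', u k z j = true) then (1:ℝ) else 0) -
                (if (∀ j ∈ S', l k z j = true) then (1:ℝ) else 0)) := by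
          rw [Finset.sum_comm]
          apply Finset.sum_congr rfl
          intro S' _
          rw [Finset.mul_sum]
      _ = _ := by
          apply Finset.sum_congr rfl
          intro S' _
          congr 1
          apply Finset.sum_congr rfl
          intro k _
          rw [hgS, hgS]
          simp only [decide_eq_true_eq]
end
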